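/- arXiv:2105.07183 — 6 statements merged into one kernel-verified Lean document; each statement's English description precedes it below -/
import Mathlib

section
/- Let A(t) = (a_ij(t)), t ∈ ℕ, be nonnegative matrices over a finite set V. The persistent graph G∞ is quasi-strongly connected if and only if there exist a constant ε > 0 and an increasing sequence of integers t_0 < t_1 < ⋯ with t_p → ∞ such that, for every p, the graph of the matrix Σ_{t=t_p}^{t_{p+1}} A(t) is quasi-strongly ε-connected. Moreover, if G∞ is quasi-strongly connected, then for EVERY ε > 0 such a sequence (t_p) exists. -/
open MeasureTheory Filter Topology Set

/-- There is a root node connected to every node by a directed walk. -/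
def QSCrel {α : Type*} (r : α → α → Prop) : Prop :=
  ∃ root : α, ∀ i : α, Relation.ReflTransGen r root i

/-- The graph of the nonnegative matrix `B` (arc `(j,i)` iff `B i j > 0`), with all
entries smaller than `ε` zeroed out, is quasi-strongly connected. -/
def QSCeps {V : Type*} (ε : ℝ) (B : V → V → ℝ) : Prop :=
  QSCrel (fun u v : V => ε ≤ B v u)

variable {V : Type*} [Fintype V] [DecidableEq V]

/-- A sequence of stochastic matrices. -/
def StochD (A : ℕ → V → V → ℝ) : Prop :=
  (∀ t : ℕ, ∀ i j : V, 0 ≤ A t i j) ∧ ∀ t : ℕ, ∀ i : V, (∑ j, A t i j) = 1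

/-- Strong aperiodicity: uniformly positive diagonal entries. -/
def StrongAper (A : ℕ → V → V → ℝ) : Prop :=
  ∃ η > (0:ℝ), ∀ t : ℕ, ∀ i : V, η ≤ A t i i

/-- `(t_p)`-boundedness (discrete time). -/
def tpBoundedD (A : ℕ → V → V → ℝ) (tp : ℕ → ℕ) : Prop :=
  ∃ L : ℝ, ∀ p : ℕ, ∀ i j : V, i ≠ j →
    (∑ t ∈ Finset.Icc (tp p) (tp (p+1)), A t i j) ≤ L

/-- Aperiodic quasi-strong connectivity (discrete time). -/
def AQSCD (A : ℕ → V → V → ℝ) : Prop :=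
  ∃ ε > (0:ℝ), ∃ tp : ℕ → ℕ, StrictMono tp ∧ tpBoundedD A tp ∧
    ∀ p : ℕ, QSCeps ε (fun i j => ∑ t ∈ Finset.Icc (tp p) (tp (p+1)), A t i j)

/-- Non-instantaneous type-symmetry (discrete time). -/
def NITSD (A : ℕ → V → V → ℝ) : Prop :=
  ∃ K ≥ (1:ℝ), ∃ tp : ℕ → ℕ, StrictMono tp ∧ tpBoundedD A tp ∧
    ∀ p : ℕ, ∀ i j : V,
      (1/K) * (∑ t ∈ Finset.Icc (tp p) (tp (p+1)), A t j i) ≤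
        (∑ t ∈ Finset.Icc (tp p) (tp (p+1)), A t i j) ∧
      (∑ t ∈ Finset.Icc (tp p) (tp (p+1)), A t i j) ≤
        K * (∑ t ∈ Finset.Icc (tp p) (tp (p+1)), A t j i)

/-- A solution of the discrete-time delayed averaging algorithm with starting time `tstar`. -/
def IsSolD (A : ℕ → V → V → ℝ) (h : V → V → ℕ → ℕ) (tstar : ℕ) (x : ℤ → V → ℝ) : Prop :=
  ∀ i : V, ∀ t : ℕ, tstar ≤ t →
    x ((t : ℤ) + 1) i = x (t : ℤ) i +
      ∑ j ∈ Finset.univ.erase i, A t i j * (x ((t : ℤ) - (h i j t : ℤ)) j - x (t : ℤ) i)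

/-- `λ(t)` (discrete): minimum of the values over the integer window `[t-h̄, t]`. -/
noncomputable def lamD (hbar : ℕ) (x : ℤ → V → ℝ) (t : ℤ) : ℝ :=
  sInf {v | ∃ s : ℤ, t - (hbar : ℤ) ≤ s ∧ s ≤ t ∧ ∃ i : V, x s i = v}

/-- `Λ(t)` (discrete): maximum of the values over the integer window `[t-h̄, t]`. -/
noncomputable def LamD (hbar : ℕ) (x : ℤ → V → ℝ) (t : ℤ) : ℝ :=
  sSup {v | ∃ s : ℤ, t - (hbar : ℤ) ≤ s ∧ s ≤ t ∧ ∃ i : V, x s i = v}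

/-- Arc `(j,i)` of the persistent graph: `∑_t A t i j = ∞`. -/
def PArcD (A : ℕ → V → V → ℝ) (j i : V) : Prop :=
  j ≠ i ∧ (∑' t : ℕ, ENNReal.ofReal (A t i j)) = ⊤

/-- `i` and `j` are joined by a walk in the persistent graph (discrete time). -/
def JoinedD (A : ℕ → V → V → ℝ) (i j : V) : Prop :=
  Relation.ReflTransGen (fun u v => PArcD A u v) i j

/-!
An arc of `G∞` is a pair whose entry series diverges. If `G∞` is quasi-strongly connected,
divergence lets each window `[t_p, t_{p+1}]` be stretched until every persistent arc has collected
weight `ε`, so the rooted walks of `G∞` survive in every window. Conversely, `V` being finite, one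
pattern of `ε`-heavy arcs recurs in infinitely many windows; each of its non-loop arcs then
carries weight `ε` arbitrarily far out, which the vanishing tails of a convergent series forbid,
so the rooted walks of that pattern live in `G∞`.
-/

theorem ENNReal.tsum_ofReal_eq_top_iff {ι : Type*} {f : ι → ℝ} (hf : ∀ i, 0 ≤ f i) :
    ∑' i, ENNReal.ofReal (f i) = ⊤ ↔ ¬Summable f := by
  refine ⟨fun h hs => hs.tsum_ofReal_ne_top h, fun h => by_contra fun hne => h ?_⟩
  simpa only [ENNReal.toReal_ofReal (hf _)] using ENNReal.summable_toReal hne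

theorem tendsto_sum_Icc_atTop_of_not_summable {f : ℕ → ℝ} (hf : ∀ n, 0 ≤ f n)
    (h : ¬Summable f) (N : ℕ) : Tendsto (fun M => ∑ t ∈ Finset.Icc N M, f t) atTop atTop := by
  have hS := (not_summable_iff_tendsto_nat_atTop_of_nonneg hf).1 h
  refine (tendsto_atTop_add_const_right _ (-∑ t ∈ Finset.range N, f t)
    (hS.comp (tendsto_add_atTop_nat 1))).congr' ?_
  filter_upwards [eventually_ge_atTop N] with M hM
  rw [Function.comp_apply, ← Finset.Ico_add_one_right_eq_Icc, Finset.sum_Ico_eq_sub _ (by omega),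
    sub_eq_add_neg]

theorem Summable.eventually_sum_Icc_lt {f : ℕ → ℝ} (hf : Summable f) {ε : ℝ} (hε : 0 < ε) :
    ∀ᶠ N in atTop, ∀ M, ∑ t ∈ Finset.Icc N M, f t < ε := by
  obtain ⟨s, hs⟩ := summable_iff_vanishing_norm.1 hf ε hε
  filter_upwards [eventually_gt_atTop (s.sup id)] with N hN M
  refine (le_abs_self _).trans_lt (hs _ (Finset.disjoint_left.2 fun t ht hts => ?_))
  have hts' : t ≤ s.sup id := Finset.le_sup (f := id) hts
  have htN : N ≤ t := (Finset.mem_Icc.1 ht).1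
  omega

theorem not_summable_of_frequently_le_sum_Icc {f : ℕ → ℝ} {a b : ℕ → ℕ} {ε : ℝ} (hε : 0 < ε)
    (ha : Tendsto a atTop atTop) (h : ∃ᶠ p in atTop, ε ≤ ∑ t ∈ Finset.Icc (a p) (b p), f t) :
    ¬Summable f := fun hf =>
  h ((ha.eventually (hf.eventually_sum_Icc_lt hε)).mono fun p hp => (hp (b p)).not_ge)

theorem exists_strictMono_forall_of_forall_exists_gt {P : ℕ → ℕ → Prop}
    (h : ∀ N, ∃ M, N < M ∧ P N M) : ∃ tp : ℕ → ℕ, StrictMono tp ∧ ∀ p, P (tp p) (tp (p + 1)) := by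
  choose next hlt hP using h
  exact ⟨fun p => Nat.rec (motive := fun _ => ℕ) 0 (fun _ => next) p,
    strictMono_nat_of_lt_succ fun _ => hlt _, fun _ => hP _⟩

theorem QSCrel.mono_of_ne {α : Type*} {r s : α → α → Prop} (h : QSCrel r)
    (hrs : ∀ u v, u ≠ v → r u v → s u v) : QSCrel s := by
  obtain ⟨root, hroot⟩ := h
  refine ⟨root, fun i => ?_⟩
  rw [← Relation.reflTransGen_reflGen]
  refine Relation.ReflTransGen.mono (fun u v huv => ?_) _ _ (hroot i)
  by_cases hne : u = v
  · exact hne ▸ Relation.ReflGen.refl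
  · exact Relation.ReflGen.single (hrs u v hne huv)

section PersistentGraph

variable {α : Type*} {A : ℕ → α → α → ℝ}

theorem pArcD_iff_not_summable (hnn : ∀ t i j, 0 ≤ A t i j) {j i : α} :
    PArcD A j i ↔ j ≠ i ∧ ¬Summable fun t => A t i j :=
  and_congr_right' (ENNReal.tsum_ofReal_eq_top_iff fun t => hnn t i j)

theorem exists_forall_pArcD_le_sum_Icc [Finite α] (hnn : ∀ t i j, 0 ≤ A t i j) (ε : ℝ) (N : ℕ) :
    ∃ M, N < M ∧ ∀ u v, PArcD A u v → ε ≤ ∑ t ∈ Finset.Icc N M, A t v u := by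
  have hwin : ∀ u v, ∀ᶠ M in atTop, PArcD A u v → ε ≤ ∑ t ∈ Finset.Icc N M, A t v u := by
    intro u v
    by_cases h : PArcD A u v
    · filter_upwards [(tendsto_sum_Icc_atTop_of_not_summable (fun t => hnn t v u)
        ((pArcD_iff_not_summable hnn).1 h).2 N).eventually_ge_atTop ε] with M hM using fun _ => hM
    · exact Eventually.of_forall fun _ h' => absurd h' h
  exact ((eventually_gt_atTop N).and (eventually_all.2 fun u => eventually_all.2 (hwin u))).exists

theorem exists_windows_qsceps_of_qscrel_pArcD [Finite α] (hnn : ∀ t i j, 0 ≤ A t i j)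
    (h : QSCrel fun u v : α => PArcD A u v) (ε : ℝ) :
    ∃ tp : ℕ → ℕ, StrictMono tp ∧ Tendsto tp atTop atTop ∧
      ∀ p : ℕ, QSCeps ε (fun i j => ∑ t ∈ Finset.Icc (tp p) (tp (p+1)), A t i j) := by
  obtain ⟨tp, hmono, hwin⟩ :=
    exists_strictMono_forall_of_forall_exists_gt (exists_forall_pArcD_le_sum_Icc hnn ε)
  exact ⟨tp, hmono, hmono.tendsto_atTop, fun p => h.mono_of_ne fun u v _ => hwin p u v⟩

theorem qscrel_pArcD_of_windows_qsceps [Finite α] (hnn : ∀ t i j, 0 ≤ A t i j) {ε : ℝ}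
    (hε : 0 < ε) {tp : ℕ → ℕ} (htp : Tendsto tp atTop atTop)
    (hq : ∀ p : ℕ, QSCeps ε (fun i j => ∑ t ∈ Finset.Icc (tp p) (tp (p+1)), A t i j)) :
    QSCrel fun u v : α => PArcD A u v := by
  set W : ℕ → α → α → Prop := fun p u v => ε ≤ ∑ t ∈ Finset.Icc (tp p) (tp (p+1)), A t v u
  obtain ⟨R, hR⟩ := frequently_exists.1 (Frequently.of_forall fun p => ⟨W p, rfl⟩ :
    ∃ᶠ p in atTop, ∃ R, W p = R)
  obtain ⟨p₀, rfl⟩ := hR.exists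
  exact (hq p₀ : QSCrel (W p₀)).mono_of_ne fun u v huv hW => (pArcD_iff_not_summable hnn).2
    ⟨huv, not_summable_of_frequently_le_sum_Icc hε htp
      (hR.mono fun p hp => show W p u v from hp ▸ hW)⟩

end PersistentGraph

theorem stmt4
    (A : ℕ → V → V → ℝ) (hnn : ∀ t : ℕ, ∀ i j : V, 0 ≤ A t i j) :
    (QSCrel (fun u v : V => PArcD A u v) ↔
      ∃ ε > (0:ℝ), ∃ tp : ℕ → ℕ, StrictMono tp ∧ Tendsto tp atTop atTop ∧
        ∀ p : ℕ, QSCeps ε (fun i j => ∑ t ∈ Finset.Icc (tp p) (tp (p+1)), A t i j)) ∧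
    (QSCrel (fun u v : V => PArcD A u v) →
      ∀ ε > (0:ℝ), ∃ tp : ℕ → ℕ, StrictMono tp ∧ Tendsto tp atTop atTop ∧
        ∀ p : ℕ, QSCeps ε (fun i j => ∑ t ∈ Finset.Icc (tp p) (tp (p+1)), A t i j)) :=
  ⟨⟨fun h => ⟨1, one_pos, exists_windows_qsceps_of_qscrel_pArcD hnn h 1⟩,
    fun ⟨_, hε, _, _, htp, hq⟩ => qscrel_pArcD_of_windows_qsceps hnn hε htp hq⟩,
    fun h ε _ => exists_windows_qsceps_of_qscrel_pArcD hnn h ε⟩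
end

section
/- Let a_ij : [0,∞) → [0,∞), i ≠ j in a finite set V, be measurable locally integrable weight functions whose persistent graph G∞ is quasi-strongly connected, and suppose the weights are arc-balanced: there exists K ≥ 1 such that K^{-1}·a_km(t) ≤ a_ij(t) ≤ K·a_km(t) for all t ≥ 0 and every pair of persistent arcs (m,k), (j,i) ∈ G∞. Then the matrix function A(·) is aperiodically quasi-strongly connected (AQSC). -/
open MeasureTheory Filter Topology Set

variable {V : Type*} [Fintype V] [DecidableEq V]

/-- An increasing sequence of times tending to infinity, starting in `[0,∞)`. -/
def IncrSeq (tp : ℕ → ℝ) : Prop :=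
  StrictMono tp ∧ Tendsto tp atTop atTop ∧ 0 ≤ tp 0

/-- `(t_p)`-boundedness of the matrix function `A(⬝) = (a i j ⬝)`. -/
def tpBounded (a : V → V → ℝ → ℝ) (tp : ℕ → ℝ) : Prop :=
  ∃ L : ℝ, ∀ p : ℕ, ∀ i j : V, i ≠ j → (∫ s in (tp p)..(tp (p+1)), a i j s) ≤ L

/-- Aperiodic quasi-strong connectivity. -/
def AQSC (a : V → V → ℝ → ℝ) : Prop :=
  ∃ ε > (0:ℝ), ∃ tp : ℕ → ℝ, IncrSeq tp ∧ tpBounded a tp ∧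
    ∀ p : ℕ, QSCeps ε (fun i j => ∫ s in (tp p)..(tp (p+1)), a i j s)

/-- Non-instantaneous type-symmetry. -/
def NITS (a : V → V → ℝ → ℝ) : Prop :=
  ∃ K ≥ (1:ℝ), ∃ tp : ℕ → ℝ, IncrSeq tp ∧ tpBounded a tp ∧
    ∀ p : ℕ, ∀ i j : V,
      (1/K) * (∫ s in (tp p)..(tp (p+1)), a j i s) ≤ (∫ s in (tp p)..(tp (p+1)), a i j s) ∧
      (∫ s in (tp p)..(tp (p+1)), a i j s) ≤ K * (∫ s in (tp p)..(tp (p+1)), a j i s)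

/-- Uniform local integrability of the weights. -/
def ULI (a : V → V → ℝ → ℝ) : Prop :=
  ∀ D > (0:ℝ), ∃ M : ℝ, ∀ t ≥ (0:ℝ), ∀ i j : V, i ≠ j → (∫ s in t..(t+D), a i j s) ≤ M

/-- Admissible weights: measurable, nonnegative, locally integrable. -/
def Weights (a : V → V → ℝ → ℝ) : Prop :=
  ∀ i j : V, i ≠ j → Measurable (a i j) ∧ (∀ t ≥ (0:ℝ), 0 ≤ a i j t) ∧
    ∀ T : ℝ, IntegrableOn (a i j) (Icc 0 T)

/-- Admissible delays: measurable with values in `[0, h̄]`. -/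
def Delays (h : V → V → ℝ → ℝ) (hbar : ℝ) : Prop :=
  ∀ i j : V, Measurable (h i j) ∧ ∀ t ≥ (0:ℝ), h i j t ∈ Icc (0:ℝ) hbar

/-- Right-hand side of the delayed averaging dynamics. -/
def rhs (a h : V → V → ℝ → ℝ) (x : ℝ → V → ℝ) (i : V) (s : ℝ) : ℝ :=
  ∑ j ∈ Finset.univ.erase i, a i j s * (x (s - h i j s) j - x s i)

/-- A solution of the continuous-time delayed averaging algorithm with starting time `tstar`. -/
def IsSol (a h : V → V → ℝ → ℝ) (hbar tstar : ℝ) (x : ℝ → V → ℝ) : Prop :=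
  (∀ i : V, AEStronglyMeasurable (fun s => x s i) (volume.restrict (Icc (tstar - hbar) tstar))) ∧
  (∃ M : ℝ, ∀ s ∈ Icc (tstar - hbar) tstar, ∀ i : V, |x s i| ≤ M) ∧
  ∀ i : V, ∀ t ≥ tstar,
    IntervalIntegrable (rhs a h x i) volume tstar t ∧
    x t i = x tstar i + ∫ s in tstar..t, rhs a h x i s

/-- `Λ(t)`: supremum of the values over the window `[t-h̄, t]`. -/
noncomputable def Lam (hbar : ℝ) (x : ℝ → V → ℝ) (t : ℝ) : ℝ :=
  sSup {v | ∃ s ∈ Icc (t - hbar) t, ∃ i : V, x s i = v}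

/-- `λ(t)`: infimum of the values over the window `[t-h̄, t]`. -/
noncomputable def lam (hbar : ℝ) (x : ℝ → V → ℝ) (t : ℝ) : ℝ :=
  sInf {v | ∃ s ∈ Icc (t - hbar) t, ∃ i : V, x s i = v}

/-- Arc `(j,i)` of the persistent graph: `∫₀^∞ a i j = ∞`. -/
def PArc (a : V → V → ℝ → ℝ) (j i : V) : Prop :=
  j ≠ i ∧ (∫⁻ t in Ioi (0:ℝ), ENNReal.ofReal (a i j t)) = ⊤

/-- `i` and `j` are joined by a walk in the persistent graph. -/
def JoinedG (a : V → V → ℝ → ℝ) (i j : V) : Prop :=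
  Relation.ReflTransGen (fun u v => PArc a u v) i j

/-!
Fix one persistent arc as a reference clock: its primitive `F(t) = ∫₀ᵗ a` is continuous,
nondecreasing and unbounded, so one can choose times `t_p` with `F(t_p) = p`; each window
`[t_p, t_{p+1}]` then carries reference mass exactly `1`. By arc-balance every persistent arc
carries mass in `[K⁻¹, K]` on every window, which gives quasi-strong `K⁻¹`-connectivity, while a
non-persistent arc carries at most its finite total mass.
-/

lemma QSCrel.mono {α : Type*} {r s : α → α → Prop} (hrs : ∀ u v, r u v → s u v)
    (hr : QSCrel r) : QSCrel s :=
  let ⟨root, hroot⟩ := hr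
  ⟨root, fun i => Relation.ReflTransGen.mono hrs _ _ (hroot i)⟩

lemma QSCrel.exists_forall_eq {α : Type*} {r : α → α → Prop} (hr : QSCrel r)
    (hempty : ∀ u v, ¬ r u v) : ∃ root : α, ∀ i, i = root := by
  obtain ⟨root, hroot⟩ := hr
  refine ⟨root, fun i => ?_⟩
  rcases (hroot i).cases_head with h | ⟨c, hc, -⟩
  · exact h.symm
  · exact absurd hc (hempty root c)

lemma aqsc_of_forall_eq {ι : Type*} {root : ι} (hroot : ∀ i, i = root) (a : ι → ι → ℝ → ℝ) :
    AQSC a := by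
  refine ⟨1, one_pos, fun n => n,
    ⟨Nat.strictMono_cast, tendsto_natCast_atTop_atTop, Nat.cast_nonneg 0⟩, ⟨0, ?_⟩, fun _ => ?_⟩
  · exact fun _ i j hij => absurd ((hroot i).trans (hroot j).symm) hij
  · exact ⟨root, fun i => hroot i ▸ Relation.ReflTransGen.refl⟩

lemma IncrSeq.nonneg {tp : ℕ → ℝ} (htp : IncrSeq tp) (p : ℕ) : 0 ≤ tp p :=
  htp.2.2.trans (htp.1.monotone p.zero_le)

section Primitive

variable {f : ℝ → ℝ} {u v : ℝ}

lemma intervalIntegrable_of_forall_integrableOn_Icc (hfi : ∀ T, IntegrableOn f (Icc 0 T))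
    (hu : 0 ≤ u) (hv : 0 ≤ v) : IntervalIntegrable f volume u v :=
  ((hfi (max u v)).mono_set (Icc_subset_Icc_left (le_min hu hv))).intervalIntegrable

variable (hf0 : ∀ t ≥ 0, 0 ≤ f t) (hfi : ∀ T, IntegrableOn f (Icc 0 T))
include hf0 hfi

lemma monotoneOn_primitive : MonotoneOn (fun t => ∫ s in (0:ℝ)..t, f s) (Ici 0) := by
  intro u hu v hv huv
  dsimp only
  rw [← intervalIntegral.integral_add_adjacent_intervals
    (intervalIntegrable_of_forall_integrableOn_Icc hfi le_rfl hu)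
    (intervalIntegrable_of_forall_integrableOn_Icc hfi hu hv)]
  exact le_add_of_nonneg_right
    (intervalIntegral.integral_nonneg huv fun t ht => hf0 t (le_trans hu ht.1))

lemma exists_le_primitive_of_lintegral_eq_top
    (htop : ∫⁻ t in Ioi 0, ENNReal.ofReal (f t) = ⊤) (C : ℝ) :
    ∃ T ≥ 0, C ≤ ∫ s in (0:ℝ)..T, f s := by
  by_contra! hC
  have hnorm : ∀ n : ℕ, ∫ s in (0:ℝ)..n, ‖f s‖ = ∫ s in (0:ℝ)..n, f s := fun n =>
    intervalIntegral.integral_congr fun t ht => Real.norm_of_nonneg <|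
      hf0 t (by rw [uIcc_of_le n.cast_nonneg] at ht; exact ht.1)
  have hint : IntegrableOn f (Ioi 0) :=
    integrableOn_Ioi_of_intervalIntegral_norm_bounded (l := atTop) C 0
      (fun n : ℕ => (hfi n).mono_set Ioc_subset_Icc_self) tendsto_natCast_atTop_atTop
      (Eventually.of_forall fun n => (hnorm n ▸ hC n n.cast_nonneg).le)
  exact hint.lintegral_lt_top.ne htop

lemma exists_primitive_eq_of_lintegral_eq_top
    (htop : ∫⁻ t in Ioi 0, ENNReal.ofReal (f t) = ⊤) {c : ℝ} (hc : 0 ≤ c) :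
    ∃ t ≥ 0, ∫ s in (0:ℝ)..t, f s = c := by
  obtain ⟨T, hT, hcT⟩ := exists_le_primitive_of_lintegral_eq_top hf0 hfi htop c
  have hcont : ContinuousOn (fun t => ∫ s in (0:ℝ)..t, f s) (Icc 0 T) := by
    have hT' : IntegrableOn f (uIcc 0 T) := by simpa only [uIcc_of_le hT] using hfi T
    simpa only [uIcc_of_le hT] using intervalIntegral.continuousOn_primitive_interval hT'
  obtain ⟨t, ht, hFt⟩ := intermediate_value_Icc hT hcont
    ⟨by simpa only [intervalIntegral.integral_same] using hc, hcT⟩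
  exact ⟨t, ht.1, hFt⟩

lemma exists_incrSeq_integral_eq_one (htop : ∫⁻ t in Ioi 0, ENNReal.ofReal (f t) = ⊤) :
    ∃ tp : ℕ → ℝ, IncrSeq tp ∧ ∀ p, ∫ s in (tp p)..(tp (p+1)), f s = 1 := by
  set F : ℝ → ℝ := fun t => ∫ s in (0:ℝ)..t, f s
  choose tp htp0 hFtp using fun p : ℕ =>
    exists_primitive_eq_of_lintegral_eq_top hf0 hfi htop p.cast_nonneg
  have hF := monotoneOn_primitive hf0 hfi
  have hmono : StrictMono tp := strictMono_nat_of_lt_succ fun p => lt_of_not_ge fun h => by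
    have := hF (htp0 _) (htp0 _) h
    simp only [hFtp, Nat.cast_succ] at this
    linarith
  have htend : Tendsto tp atTop atTop := tendsto_atTop_atTop.2 fun b =>
    ⟨⌈F (max b 0)⌉₊ + 1, fun n hn => by
      by_contra! hlt
      have h1 : F (tp n) ≤ F (max b 0) :=
        hF (htp0 n) (le_max_right b 0) (hlt.le.trans (le_max_left b 0))
      have h2 : (⌈F (max b 0)⌉₊ + 1 : ℝ) ≤ n := by exact_mod_cast hn
      simp only [F, hFtp] at h1
      linarith [Nat.le_ceil (F (max b 0))]⟩
  refine ⟨tp, ⟨hmono, htend, htp0 0⟩, fun p => ?_⟩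
  rw [← intervalIntegral.integral_interval_sub_left
    (intervalIntegrable_of_forall_integrableOn_Icc hfi le_rfl (htp0 _))
    (intervalIntegrable_of_forall_integrableOn_Icc hfi le_rfl (htp0 _)), hFtp, hFtp]
  push_cast
  ring

lemma integral_le_toReal_lintegral_Ioi (hfin : ∫⁻ t in Ioi 0, ENNReal.ofReal (f t) ≠ ⊤)
    (hu : 0 ≤ u) (huv : u ≤ v) :
    ∫ s in u..v, f s ≤ (∫⁻ t in Ioi 0, ENNReal.ofReal (f t)).toReal := by
  have hint := intervalIntegrable_of_forall_integrableOn_Icc hfi hu (hu.trans huv)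
  rw [intervalIntegral.integral_of_le huv, integral_eq_lintegral_of_nonneg_ae
    ((ae_restrict_mem measurableSet_Ioc).mono fun t ht => hf0 t (hu.trans ht.1.le))
    hint.1.aestronglyMeasurable]
  exact ENNReal.toReal_mono hfin (lintegral_mono_set fun t ht => hu.trans_lt ht.1)

end Primitive

section Weights

variable {ι : Type*} {a : ι → ι → ℝ → ℝ} {i j k m : ι} {u v K : ℝ}

lemma Weights.intervalIntegrable (hW : Weights a) (hij : i ≠ j) (hu : 0 ≤ u) (hv : 0 ≤ v) :
    IntervalIntegrable (a i j) volume u v :=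
  intervalIntegrable_of_forall_integrableOn_Icc (hW i j hij).2.2 hu hv

lemma Weights.integral_bounds_of_balanced (hW : Weights a) (hij : i ≠ j) (hkm : k ≠ m)
    (hbal : ∀ t ≥ (0:ℝ), K⁻¹ * a k m t ≤ a i j t ∧ a i j t ≤ K * a k m t)
    (hu : 0 ≤ u) (huv : u ≤ v) :
    K⁻¹ * ∫ s in u..v, a k m s ≤ ∫ s in u..v, a i j s ∧
      ∫ s in u..v, a i j s ≤ K * ∫ s in u..v, a k m s := by
  have hij_int := hW.intervalIntegrable hij hu (hu.trans huv)
  have hkm_int := hW.intervalIntegrable hkm hu (hu.trans huv)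
  simp only [← intervalIntegral.integral_const_mul]
  exact ⟨intervalIntegral.integral_mono_on huv (hkm_int.const_mul _) hij_int
      fun t ht => (hbal t (hu.trans ht.1)).1,
    intervalIntegral.integral_mono_on huv hij_int (hkm_int.const_mul _)
      fun t ht => (hbal t (hu.trans ht.1)).2⟩

end Weights

theorem stmt6
    (a : V → V → ℝ → ℝ) (hW : Weights a)
    (hQSC : QSCrel (fun u v : V => PArc a u v))
    (K : ℝ) (hK : 1 ≤ K)
    (hbal : ∀ t ≥ (0:ℝ), ∀ i j k m : V, PArc a j i → PArc a m k →
      K⁻¹ * a k m t ≤ a i j t ∧ a i j t ≤ K * a k m t) :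
    AQSC a := by
  by_cases hP : ∃ j i, PArc a j i
  swap
  · push Not at hP
    obtain ⟨root, hroot⟩ := hQSC.exists_forall_eq hP
    exact aqsc_of_forall_eq hroot a
  obtain ⟨j₀, i₀, h₀⟩ := hP
  obtain ⟨-, hnn₀, hint₀⟩ := hW i₀ j₀ h₀.1.symm
  obtain ⟨tp, htp, hone⟩ := exists_incrSeq_integral_eq_one hnn₀ hint₀ h₀.2
  have hstep : ∀ p, tp p ≤ tp (p + 1) := fun p => (htp.1 p.lt_succ_self).le
  have hpers : ∀ p i j, PArc a j i →
      K⁻¹ ≤ ∫ s in (tp p)..(tp (p+1)), a i j s ∧ ∫ s in (tp p)..(tp (p+1)), a i j s ≤ K := by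
    intro p i j hji
    simpa only [hone, mul_one] using hW.integral_bounds_of_balanced hji.1.symm h₀.1.symm
      (fun t ht => hbal t ht i j i₀ j₀ hji h₀) (htp.nonneg p) (hstep p)
  set S := ∑ q : V × V, (∫⁻ t in Ioi 0, ENNReal.ofReal (a q.1 q.2 t)).toReal
  have hS : ∀ i j, (∫⁻ t in Ioi 0, ENNReal.ofReal (a i j t)).toReal ≤ S := fun i j =>
    Finset.single_le_sum
      (f := fun q : V × V => (∫⁻ t in Ioi 0, ENNReal.ofReal (a q.1 q.2 t)).toReal)
      (fun _ _ => ENNReal.toReal_nonneg) (Finset.mem_univ (i, j))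
  refine ⟨K⁻¹, by positivity, tp, htp, ⟨K + S, fun p i j hij => ?_⟩,
    fun p => hQSC.mono fun u v huv => (hpers p v u huv).1⟩
  by_cases hji : PArc a j i
  · linarith [(hpers p i j hji).2, ENNReal.toReal_nonneg.trans (hS i j)]
  · have hfin : ∫⁻ t in Ioi 0, ENNReal.ofReal (a i j t) ≠ ⊤ := fun h => hji ⟨hij.symm, h⟩
    linarith [hS i j, integral_le_toReal_lintegral_Ioi (hW i j hij).2.1 (hW i j hij).2.2 hfin
      (htp.nonneg p) (hstep p)]
end

section
/- Fix measurable locally integrable weights a_ij, a delay bound h̄ ≥ 0 and measurable delays h_ij(t) ∈ [0,h̄], and two agents i, j ∈ V. Suppose the undisturbed continuous-time delayed averaging algorithm establishes consensus between i and j, i.e., for every starting time and every solution x of the undisturbed algorithm the limits lim_{t→∞} x_i(t) and lim_{t→∞} x_j(t) exist and are equal. Then for every disturbance f = (f_m)_{m∈V} with ∫_0^∞ |f_m(t)| dt < ∞ for all m ∈ V, every solution of the disturbed algorithm also has existing and equal limits lim_{t→∞} x_i(t) = lim_{t→∞} x_j(t). -/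
/-
Fix `ε > 0` and a time `T` after which the disturbance has total mass
`∫_T^∞ ∑ m, |f m| ≤ ε`. Let `y` be the undisturbed solution that agrees with `x` on the window
`[T - h̄, T]`; it exists by Picard iteration, whose successive differences decay geometrically
once `[T, U]` is cut into pieces of small weight. The difference `x - y` solves the disturbed
dynamics with zero history, and by the maximum principle (the consensus terms never push a
coordinate above the largest earlier value, so only the disturbance can) it stays within `ε`
of `0`. Hence `x i` and `x j` eventually lie within `2ε` of the common limit of `y i` and
`y j`; as `ε` is arbitrary, they converge to a common limit.
-/

open MeasureTheory Filter Topology Set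

variable {V : Type*} [Fintype V] [DecidableEq V]

/-- Right-hand side of the disturbed delayed averaging dynamics. -/
def rhsF (a h : V → V → ℝ → ℝ) (f : V → ℝ → ℝ) (x : ℝ → V → ℝ) (i : V) (s : ℝ) : ℝ :=
  (∑ j ∈ Finset.univ.erase i, a i j s * (x (s - h i j s) j - x s i)) + f i s

/-- A solution of the disturbed continuous-time delayed averaging algorithm. -/
def IsSolF (a h : V → V → ℝ → ℝ) (f : V → ℝ → ℝ) (hbar tstar : ℝ) (x : ℝ → V → ℝ) : Prop :=
  (∀ i : V, AEStronglyMeasurable (fun s => x s i) (volume.restrict (Icc (tstar - hbar) tstar))) ∧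
  (∃ M : ℝ, ∀ s ∈ Icc (tstar - hbar) tstar, ∀ i : V, |x s i| ≤ M) ∧
  ∀ i : V, ∀ t ≥ tstar,
    IntervalIntegrable (rhsF a h f x i) volume tstar t ∧
    x t i = x tstar i + ∫ s in tstar..t, rhsF a h f x i s

theorem exists_tendsto_of_forall_eventually_dist_lt {α E : Type*} [PseudoMetricSpace E]
    [CompleteSpace E] {l : Filter α} [l.NeBot] {u v : α → E}
    (H : ∀ ε > 0, ∃ c, ∀ᶠ t in l, dist (u t) c < ε ∧ dist (v t) c < ε) :
    ∃ c, Tendsto u l (𝓝 c) ∧ Tendsto v l (𝓝 c) := by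
  have hu : Cauchy (map u l) := by
    refine Metric.cauchy_iff.2 ⟨inferInstance, fun ε hε => ?_⟩
    obtain ⟨c, hc⟩ := H (ε / 2) (half_pos hε)
    refine ⟨u '' {t | dist (u t) c < ε / 2 ∧ dist (v t) c < ε / 2}, image_mem_map hc, ?_⟩
    rintro _ ⟨s, hs, rfl⟩ _ ⟨t, ht, rfl⟩
    linarith [dist_triangle_right (u s) (u t) c, hs.1, ht.1]
  obtain ⟨L, hL⟩ := CompleteSpace.complete hu
  refine ⟨L, hL, Metric.tendsto_nhds.2 fun ε hε => ?_⟩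
  obtain ⟨c, hc⟩ := H (ε / 3) (by positivity)
  filter_upwards [hc, Metric.tendsto_nhds.1 hL (ε / 3) (by positivity)] with t hct hLt
  linarith [dist_triangle4 (v t) c (u t) L, dist_comm c (u t), hct.1, hct.2]

theorem continuous_integral_max {F : ℝ → ℝ} {T : ℝ}
    (hF : ∀ U, T ≤ U → IntervalIntegrable F volume T U) :
    Continuous fun t => ∫ s in T..max t T, F s := by
  refine continuous_iff_continuousAt.2 fun t => ?_
  have hTU : T ≤ max t T + 1 := by linarith [le_max_right t T]
  have hprim : ContinuousOn (fun b => ∫ s in T..b, F s) (Icc T (max t T + 1)) := by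
    simpa [uIcc_of_le hTU] using
      intervalIntegral.continuousOn_primitive_interval' (hF _ hTU) left_mem_uIcc
  have : ContinuousOn (fun t => ∫ s in T..max t T, F s) (Iio (max t T + 1)) :=
    hprim.comp (continuous_id.max continuous_const).continuousOn
      fun r hr => ⟨le_max_right _ _, max_le hr.le hTU⟩
  exact this.continuousAt (Iio_mem_nhds (by linarith [le_max_left t T]))

theorem MeasureTheory.IntegrableOn.intervalIntegrable_of_Ioi {g : ℝ → ℝ} {T c d : ℝ}
    (hg : IntegrableOn g (Ioi T)) (hc : T ≤ c) (hd : T ≤ d) : IntervalIntegrable g volume c d :=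
  intervalIntegrable_iff.2 (hg.mono_set fun _ hs => (le_min hc hd).trans_lt hs.1)

theorem MeasureTheory.IntegrableOn.eventually_abs_integral_le {g : ℝ → ℝ}
    (hg : IntegrableOn g (Ioi 0)) {ε : ℝ} (hε : 0 < ε) :
    ∀ᶠ T in atTop, ∀ t ≥ T, |∫ s in T..t, g s| ≤ ε := by
  set I := ∫ s in Ioi 0, g s
  obtain ⟨N, hN⟩ := eventually_atTop.1 <|
    ((intervalIntegral_tendsto_integral_Ioi 0 hg tendsto_id).eventually
      (Metric.closedBall_mem_nhds _ (half_pos hε))).and (eventually_ge_atTop 0)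
  refine eventually_atTop.2 ⟨N, fun T hT t ht => ?_⟩
  obtain ⟨h₁, hT0⟩ := hN T hT
  obtain ⟨h₂, ht0⟩ := hN t (hT.trans ht)
  simp only [id, Real.dist_eq] at h₁ h₂
  have hsplit : ∫ s in T..t, g s = ((∫ s in (0)..t, g s) - I) - ((∫ s in (0)..T, g s) - I) := by
    rw [← intervalIntegral.integral_interval_sub_left (hg.intervalIntegrable_of_Ioi le_rfl ht0)
      (hg.intervalIntegrable_of_Ioi le_rfl hT0)]
    ring
  rw [hsplit]
  linarith [abs_sub ((∫ s in (0)..t, g s) - I) ((∫ s in (0)..T, g s) - I)]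

theorem ContinuousOn.exists_last_le {u : ℝ → ℝ} {a b c : ℝ} (hab : a ≤ b)
    (hu : ContinuousOn u (Icc a b)) (ha : u a ≤ c) :
    ∃ t ∈ Icc a b, u t ≤ c ∧ ∀ s ∈ Ioc t b, c < u s := by
  have hbdd : BddAbove (Icc a b ∩ u ⁻¹' Iic c) := ⟨b, fun _ hs => hs.1.2⟩
  have hmem := (hu.preimage_isClosed_of_isClosed isClosed_Icc isClosed_Iic).csSup_mem
    ⟨a, ⟨le_rfl, hab⟩, ha⟩ hbdd
  refine ⟨_, hmem.1, hmem.2, fun s hs => lt_of_not_ge fun hsc => ?_⟩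
  exact (le_csSup hbdd ⟨⟨hmem.1.1.trans hs.1.le, hs.2⟩, hsc⟩).not_gt hs.1

theorem IntervalIntegrable.exists_pos_integral_le {w : ℝ → ℝ} {T U ε : ℝ}
    (hw : IntervalIntegrable w volume T U) (hTU : T ≤ U) (hε : 0 < ε) :
    ∃ δ > 0, ∀ t₀ ∈ Icc T U, ∀ t ∈ Icc T U, t₀ ≤ t → t ≤ t₀ + δ → ∫ s in t₀..t, w s ≤ ε := by
  have hcont := intervalIntegral.continuousOn_primitive_interval' hw left_mem_uIcc
  rw [uIcc_of_le hTU] at hcont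
  obtain ⟨δ, hδ, hδ'⟩ := Metric.uniformContinuousOn_iff_le.1
    (isCompact_Icc.uniformContinuousOn_of_continuous hcont) ε hε
  refine ⟨δ, hδ, fun t₀ ht₀ t ht h₁ h₂ => ?_⟩
  have hd := hδ' t ht t₀ ht₀ (by rw [Real.dist_eq, abs_le]; constructor <;> linarith)
  have hsub : ∀ r ∈ Icc T U, IntervalIntegrable w volume T r := fun r hr =>
    hw.mono_set (by rw [uIcc_of_le hr.1, uIcc_of_le hTU]; exact Icc_subset_Icc le_rfl hr.2)
  rw [Real.dist_eq, intervalIntegral.integral_interval_sub_left (hsub t ht) (hsub t₀ ht₀)] at hd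
  exact (le_abs_self _).trans hd

/- Cut `[T, U]` into pieces of `w`-mass at most `1/4`; on the `k`-th piece the bound
`C * 4 ^ k * (1 / 3) ^ n` passes from `n` to `n + 1`, by induction on `k`. -/
theorem exists_le_geometric_of_volterra {T U C : ℝ} {w : ℝ → ℝ} {D : ℕ → ℝ → ℝ}
    (hw : IntervalIntegrable w volume T U) (hC : 0 ≤ C) (h0 : ∀ t ∈ Icc T U, D 0 t ≤ C)
    (hT : ∀ n, D (n + 1) T ≤ 0)
    (hstep : ∀ n B t₀ t, T ≤ t₀ → t₀ ≤ t → t ≤ U → 0 ≤ B → (∀ s ∈ Icc T t, D n s ≤ B) →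
      D (n + 1) t ≤ D (n + 1) t₀ + (∫ s in t₀..t, w s) * B) :
    ∃ K ≥ 0, ∀ n, ∀ t ∈ Icc T U, D n t ≤ K * (1 / 3) ^ n := by
  rcases lt_or_ge U T with hUT | hTU
  · exact ⟨0, le_rfl, fun n t ht => absurd (ht.1.trans ht.2) (not_le.2 hUT)⟩
  obtain ⟨δ, hδ, hsmall⟩ := hw.exists_pos_integral_le hTU (by norm_num : (0 : ℝ) < 1 / 4)
  have key : ∀ n k : ℕ, ∀ t ∈ Icc T U, t ≤ T + k * δ → D n t ≤ C * 4 ^ k * (1 / 3) ^ n := by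
    intro n
    induction n with
    | zero =>
      intro k t ht _
      simpa using (h0 t ht).trans (le_mul_of_one_le_right hC (one_le_pow₀ (by norm_num)))
    | succ n ihn =>
      intro k
      induction k with
      | zero =>
        intro t ht htk
        obtain rfl : t = T := le_antisymm (by simpa using htk) ht.1
        exact (hT n).trans (by positivity)
      | succ k ihk =>
        intro t ht htk
        by_cases hle : t ≤ T + k * δ
        · exact (ihk t ht hle).trans (by gcongr <;> simp)
        · rw [not_le] at hle
          have ht₀ : T + k * δ ∈ Icc T U := ⟨by simp only [le_add_iff_nonneg_right]; positivity,
            hle.le.trans ht.2⟩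
          have hB : 0 ≤ C * 4 ^ (k + 1) * (1 / 3) ^ n := by positivity
          have hw' := hsmall _ ht₀ t ht hle.le (by push_cast at htk; linarith)
          calc D (n + 1) t
              ≤ D (n + 1) (T + k * δ) + (∫ s in (T + k * δ)..t, w s) *
                  (C * 4 ^ (k + 1) * (1 / 3) ^ n) :=
                hstep n _ _ t ht₀.1 hle.le ht.2 hB fun s hs =>
                  ihn (k + 1) s ⟨hs.1, hs.2.trans ht.2⟩ (hs.2.trans htk)
            _ ≤ C * 4 ^ k * (1 / 3) ^ (n + 1) + 1 / 4 * (C * 4 ^ (k + 1) * (1 / 3) ^ n) :=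
                add_le_add (ihk _ ht₀ le_rfl) (mul_le_mul_of_nonneg_right hw' hB)
            _ = C * 4 ^ (k + 1) * (1 / 3) ^ (n + 1) := by ring
  obtain ⟨N, hN⟩ := exists_nat_ge ((U - T) / δ)
  refine ⟨C * 4 ^ N, by positivity, fun n t ht => key n N t ht ?_⟩
  rw [div_le_iff₀ hδ] at hN
  linarith [ht.2]

section Weights

variable {a h : V → V → ℝ → ℝ} {hbar T : ℝ}

omit [Fintype V] [DecidableEq V] in
theorem Weights.intervalIntegrable_s7 (hW : Weights a) {i j : V} (hij : i ≠ j) {c d : ℝ}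
    (hc : 0 ≤ c) (hd : 0 ≤ d) : IntervalIntegrable (a i j) volume c d :=
  intervalIntegrable_iff.2 <| ((hW i j hij).2.2 (max c d)).mono_set fun _ hs =>
    ⟨(le_min hc hd).trans hs.1.le, hs.2⟩

def totalWeight (a : V → V → ℝ → ℝ) (s : ℝ) : ℝ :=
  ∑ m, ∑ k ∈ Finset.univ.erase m, a m k s

theorem Weights.sum_erase_nonneg (hW : Weights a) (m : V) {s : ℝ} (hs : 0 ≤ s) :
    0 ≤ ∑ k ∈ Finset.univ.erase m, a m k s :=
  Finset.sum_nonneg fun k hk => (hW m k (Finset.ne_of_mem_erase hk).symm).2.1 s hs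

theorem Weights.totalWeight_nonneg (hW : Weights a) {s : ℝ} (hs : 0 ≤ s) :
    0 ≤ totalWeight a s :=
  Finset.sum_nonneg fun m _ => hW.sum_erase_nonneg m hs

theorem Weights.sum_erase_le_totalWeight (hW : Weights a) (m : V) {s : ℝ} (hs : 0 ≤ s) :
    ∑ k ∈ Finset.univ.erase m, a m k s ≤ totalWeight a s :=
  Finset.single_le_sum (f := fun m => ∑ k ∈ Finset.univ.erase m, a m k s)
    (fun m _ => hW.sum_erase_nonneg m hs) (Finset.mem_univ m)

theorem Weights.intervalIntegrable_totalWeight (hW : Weights a) {c d : ℝ} (hc : 0 ≤ c)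
    (hd : 0 ≤ d) : IntervalIntegrable (totalWeight a) volume c d := by
  unfold totalWeight
  have := IntervalIntegrable.sum Finset.univ fun m _ =>
    IntervalIntegrable.sum (Finset.univ.erase m) fun k hk =>
      hW.intervalIntegrable_s7 (Finset.ne_of_mem_erase hk).symm hc hd
  simpa only [Finset.sum_fn] using this

theorem rhs_sub (x y : ℝ → V → ℝ) (m : V) (s : ℝ) :
    rhs a h (x - y) m s = rhs a h x m s - rhs a h y m s := by
  simp only [rhs, Pi.sub_apply, ← Finset.sum_sub_distrib]
  exact Finset.sum_congr rfl fun _ _ => by ring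

theorem rhsF_sub (f f' : V → ℝ → ℝ) (x y : ℝ → V → ℝ) (m : V) (s : ℝ) :
    rhsF a h (f - f') (x - y) m s = rhsF a h f x m s - rhsF a h f' y m s := by
  change rhs a h (x - y) m s + (f m s - f' m s) = rhs a h x m s + f m s - (rhs a h y m s + f' m s)
  rw [rhs_sub]
  ring

theorem rhsF_zero : rhsF a h 0 = rhs a h := by
  ext x m s
  simp [rhsF, rhs]

theorem rhs_le (hW : Weights a) {y : ℝ → V → ℝ} {m : V} {B s : ℝ} (hs : 0 ≤ s) (hB0 : 0 ≤ B)
    (hB : ∀ k ≠ m, y (s - h m k s) k - y s m ≤ B) : rhs a h y m s ≤ B * totalWeight a s :=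
  calc rhs a h y m s ≤ ∑ k ∈ Finset.univ.erase m, a m k s * B :=
        Finset.sum_le_sum fun k hk => mul_le_mul_of_nonneg_left
          (hB k (Finset.ne_of_mem_erase hk)) ((hW m k (Finset.ne_of_mem_erase hk).symm).2.1 s hs)
    _ = B * ∑ k ∈ Finset.univ.erase m, a m k s := by rw [← Finset.sum_mul, mul_comm]
    _ ≤ B * totalWeight a s := mul_le_mul_of_nonneg_left (hW.sum_erase_le_totalWeight m hs) hB0

theorem abs_rhs_le (hW : Weights a) (hD : Delays h hbar) {y : ℝ → V → ℝ} {B s : ℝ}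
    (hs : 0 ≤ s) (hB0 : 0 ≤ B) (hB : ∀ r ∈ Icc (s - hbar) s, ‖y r‖ ≤ B) (m : V) :
    |rhs a h y m s| ≤ 2 * B * totalWeight a s := by
  have hterm : ∀ k ∈ Finset.univ.erase m, |a m k s * (y (s - h m k s) k - y s m)| ≤
      a m k s * (2 * B) := by
    intro k hk
    have ha := (hW m k (Finset.ne_of_mem_erase hk).symm).2.1 s hs
    have hdel := (hD m k).2 s hs
    have h₁ := (norm_le_pi_norm (y (s - h m k s)) k).trans
      (hB _ ⟨by linarith [hdel.2], by linarith [hdel.1]⟩)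
    have h₂ := (norm_le_pi_norm (y s) m).trans (hB s ⟨by linarith [hdel.1, hdel.2], le_rfl⟩)
    rw [Real.norm_eq_abs] at h₁ h₂
    rw [abs_mul, abs_of_nonneg ha]
    exact mul_le_mul_of_nonneg_left ((abs_sub _ _).trans (by linarith)) ha
  calc |rhs a h y m s| ≤ ∑ k ∈ Finset.univ.erase m, a m k s * (2 * B) :=
        (Finset.abs_sum_le_sum_abs _ _).trans (Finset.sum_le_sum hterm)
    _ = 2 * B * ∑ k ∈ Finset.univ.erase m, a m k s := by rw [← Finset.sum_mul, mul_comm]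
    _ ≤ 2 * B * totalWeight a s :=
        mul_le_mul_of_nonneg_left (hW.sum_erase_le_totalWeight m hs) (by positivity)

theorem measurable_rhs (hW : Weights a) (hD : Delays h hbar) {y : ℝ → V → ℝ}
    (hy : Continuous y) (m : V) : Measurable (rhs a h y m) :=
  Finset.measurable_sum _ fun k hk => (hW m k (Finset.ne_of_mem_erase hk).symm).1.mul <|
    (((continuous_apply k).comp hy).measurable.comp (measurable_id.sub (hD m k).1)).sub
      ((continuous_apply m).comp hy).measurable

theorem intervalIntegrable_rhs (hW : Weights a) (hD : Delays h hbar) {y : ℝ → V → ℝ}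
    (hy : Continuous y) {c d : ℝ} (hc : 0 ≤ c) (hd : 0 ≤ d) (m : V) :
    IntervalIntegrable (rhs a h y m) volume c d := by
  obtain ⟨B, hB⟩ := isCompact_Icc.exists_bound_of_continuousOn (s := Icc (-hbar) (max c d))
    hy.continuousOn
  refine (((hW.intervalIntegrable_totalWeight hc hd).const_mul (2 * max B 0))).mono_fun'
    (measurable_rhs hW hD hy m).aestronglyMeasurable ?_
  rw [EventuallyLE, ae_restrict_iff' measurableSet_uIoc]
  refine ae_of_all _ fun s hs => ?_
  have hs0 : 0 ≤ s := (le_min hc hd).trans hs.1.le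
  refine abs_rhs_le hW hD hs0 (le_max_right _ _) (fun r hr => (hB r ?_).trans (le_max_left _ _)) m
  exact ⟨by linarith [hr.1], hr.2.trans hs.2⟩

theorem tendsto_integral_rhs (hW : Weights a) (hD : Delays h hbar) {u : ℕ → ℝ → V → ℝ}
    {y : ℝ → V → ℝ} (hu : ∀ n, Continuous (u n)) (hy : Continuous y) {t : ℝ} (hT : 0 ≤ T)
    (ht : T ≤ t) {ε : ℕ → ℝ} (hε : Tendsto ε atTop (𝓝 0))
    (hdist : ∀ n, ∀ r ≤ t, ‖u n r - y r‖ ≤ ε n) (m : V) :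
    Tendsto (fun n => ∫ s in T..t, rhs a h (u n) m s) atTop
      (𝓝 (∫ s in T..t, rhs a h y m s)) := by
  have hWi := (hW.intervalIntegrable_totalWeight hT (hT.trans ht)).const_mul 2
  have hlim : Tendsto (fun n => ε n * ∫ s in T..t, 2 * totalWeight a s) atTop (𝓝 0) := by
    simpa using hε.mul_const (∫ s in T..t, 2 * totalWeight a s)
  rw [tendsto_iff_norm_sub_tendsto_zero]
  refine squeeze_zero (fun _ => norm_nonneg _) (fun n => ?_) hlim
  have hε0 : 0 ≤ ε n := (norm_nonneg _).trans (hdist n t le_rfl)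
  rw [← intervalIntegral.integral_sub (intervalIntegrable_rhs hW hD (hu n) hT (hT.trans ht) m)
    (intervalIntegrable_rhs hW hD hy hT (hT.trans ht) m), ← intervalIntegral.integral_const_mul]
  simp only [← rhs_sub]
  refine intervalIntegral.norm_integral_le_of_norm_le ht (ae_of_all _ fun s hs => ?_)
    (hWi.const_mul _)
  rw [Real.norm_eq_abs]
  linarith [abs_rhs_le (y := u n - y) hW hD (hT.trans hs.1.le) hε0
    (fun r hr => hdist n r (hr.2.trans hs.2)) m]

end Weights

section Solutions

variable {a h : V → V → ℝ → ℝ} {hbar T : ℝ} {f : V → ℝ → ℝ} {x y z : ℝ → V → ℝ}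

def SolvesFrom (a h : V → V → ℝ → ℝ) (f : V → ℝ → ℝ) (T : ℝ) (x : ℝ → V → ℝ) : Prop :=
  ∀ m, ∀ t ≥ T, IntervalIntegrable (rhsF a h f x m) volume T t ∧
    x t m = x T m + ∫ s in T..t, rhsF a h f x m s

theorem IsSol.solvesFrom (hy : IsSol a h hbar T y) : SolvesFrom a h 0 T y := fun m t ht => by
  rw [rhsF_zero]
  exact hy.2.2 m t ht

theorem IsSolF.solvesFrom (hx : IsSolF a h f hbar T x) : SolvesFrom a h f T x :=
  hx.2.2

theorem SolvesFrom.sub_eq_integral (hx : SolvesFrom a h f T x) {t₀ t : ℝ} (h₀ : T ≤ t₀)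
    (ht : t₀ ≤ t) (m : V) :
    IntervalIntegrable (rhsF a h f x m) volume t₀ t ∧
      x t m - x t₀ m = ∫ s in t₀..t, rhsF a h f x m s := by
  obtain ⟨hi₀, he₀⟩ := hx m t₀ h₀
  obtain ⟨hi, he⟩ := hx m t (h₀.trans ht)
  refine ⟨hi.mono_set ?_, ?_⟩
  · rw [uIcc_of_le ht, uIcc_of_le (h₀.trans ht)]
    exact Icc_subset_Icc h₀ le_rfl
  · rw [he, he₀, ← intervalIntegral.integral_interval_sub_left hi hi₀]
    ring

theorem SolvesFrom.mono (hx : SolvesFrom a h f T x) {T' : ℝ} (hT : T ≤ T') :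
    SolvesFrom a h f T' x := fun m t ht =>
  ⟨(hx.sub_eq_integral hT ht m).1, by linarith [(hx.sub_eq_integral hT ht m).2]⟩

theorem SolvesFrom.continuousOn (hx : SolvesFrom a h f T x) (m : V) :
    ContinuousOn (fun t => x t m) (Ici T) := by
  have : Continuous fun t => x T m + ∫ s in T..max t T, rhsF a h f x m s :=
    continuous_const.add (continuous_integral_max fun U hU => (hx m U hU).1)
  refine this.continuousOn.congr fun t (ht : T ≤ t) => ?_
  simp only [(hx m t ht).2, max_eq_left ht]

theorem SolvesFrom.sub {f' : V → ℝ → ℝ} (hx : SolvesFrom a h f T x)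
    (hy : SolvesFrom a h f' T y) : SolvesFrom a h (f - f') T (x - y) := by
  intro m t ht
  obtain ⟨hxi, hxe⟩ := hx m t ht
  obtain ⟨hyi, hye⟩ := hy m t ht
  have hr : rhsF a h (f - f') (x - y) m = fun s => rhsF a h f x m s - rhsF a h f' y m s :=
    funext (rhsF_sub f f' x y m)
  rw [hr, intervalIntegral.integral_sub hxi hyi]
  refine ⟨hxi.sub hyi, ?_⟩
  simp only [Pi.sub_apply]
  rw [hxe, hye]
  ring

theorem SolvesFrom.sub_le_of_above (hW : Weights a) (hD : Delays h hbar) {g β : ℝ → ℝ}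
    (hz : SolvesFrom a h f T z) (hT : 0 ≤ T) (hg : IntegrableOn g (Ioi T))
    (hfg : ∀ m s, f m s ≤ g s) (hβ : Monotone β) {m : V} {B t₀ t : ℝ} (h₀ : T ≤ t₀)
    (ht : t₀ ≤ t) (hB0 : 0 ≤ B) (hle : ∀ r ∈ Icc (T - hbar) t, ∀ k, z r k ≤ β r + B)
    (habove : ∀ s ∈ Ioo t₀ t, β s ≤ z s m) :
    z t m - z t₀ m ≤ B * (∫ s in t₀..t, totalWeight a s) + ∫ s in t₀..t, g s := by
  obtain ⟨hi, he⟩ := hz.sub_eq_integral h₀ ht m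
  have hWi := hW.intervalIntegrable_totalWeight (hT.trans h₀) (hT.trans (h₀.trans ht))
  have hgi := hg.intervalIntegrable_of_Ioi h₀ (h₀.trans ht)
  rw [he, ← intervalIntegral.integral_const_mul,
    ← intervalIntegral.integral_add (hWi.const_mul B) hgi]
  refine intervalIntegral.integral_mono_on_of_le_Ioo ht hi ((hWi.const_mul B).add hgi)
    fun s hs => add_le_add (rhs_le hW (hT.trans (h₀.trans hs.1.le)) hB0 fun k _ => ?_) (hfg m s)
  have hdel := (hD m k).2 s (hT.trans (h₀.trans hs.1.le))
  have := hle (s - h m k s) ⟨by linarith [hdel.2, hs.1], by linarith [hdel.1, hs.2]⟩ k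
  linarith [habove s hs, hβ (show s - h m k s ≤ s by linarith [hdel.1])]

def excess (z : ℝ → V → ℝ) (β : ℝ → ℝ) (r : ℝ) : ℝ :=
  ‖fun k => max (z r k - β r) 0‖

omit [DecidableEq V] in
theorem le_add_excess (z : ℝ → V → ℝ) (β : ℝ → ℝ) (r : ℝ) (k : V) :
    z r k ≤ β r + excess z β r := by
  have := norm_le_pi_norm (fun k => max (z r k - β r) 0) k
  rw [Real.norm_of_nonneg (le_max_right _ _)] at this
  unfold excess
  linarith [le_max_left (z r k - β r) 0]

omit [DecidableEq V] in
theorem excess_le_iff {z : ℝ → V → ℝ} {β : ℝ → ℝ} {r c : ℝ} (hc : 0 ≤ c) :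
    excess z β r ≤ c ↔ ∀ k, z r k ≤ β r + c := by
  simp only [excess, pi_norm_le_iff_of_nonneg hc, Real.norm_of_nonneg (le_max_right _ 0),
    max_le_iff, hc, and_true, sub_le_iff_le_add']

/- Take the last time `τ ≤ t` at which coordinate `k` is within `excess z β t₀` of the barrier.
On `(τ, t]` it lies above the barrier, where the consensus term raises it at rate at most
`B * totalWeight a`. -/
theorem SolvesFrom.excess_le (hW : Weights a) (hD : Delays h hbar) {g β : ℝ → ℝ}
    (hz : SolvesFrom a h f T z) (hT : 0 ≤ T) (hg : IntegrableOn g (Ioi T))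
    (hfg : ∀ m s, f m s ≤ g s) (hβ : Monotone β) (hβc : Continuous β)
    (hβg : ∀ t₀ t, T ≤ t₀ → t₀ ≤ t → β t - β t₀ = ∫ s in t₀..t, g s)
    (hhist : ∀ r ∈ Icc (T - hbar) T, ∀ k, z r k ≤ β r) {B t₀ t : ℝ} (h₀ : T ≤ t₀)
    (ht : t₀ ≤ t) (hB0 : 0 ≤ B) (hB : ∀ s ∈ Icc T t, excess z β s ≤ B) :
    excess z β t ≤ excess z β t₀ + (∫ s in t₀..t, totalWeight a s) * B := by
  have hWnn : ∀ {c d}, T ≤ c → c ≤ d → 0 ≤ ∫ s in c..d, totalWeight a s := fun hc hcd =>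
    intervalIntegral.integral_nonneg hcd fun s hs =>
      hW.totalWeight_nonneg (hT.trans (hc.trans hs.1))
  have hE0 : 0 ≤ excess z β t₀ := norm_nonneg _
  refine (excess_le_iff (add_nonneg hE0 (mul_nonneg (hWnn h₀ ht) hB0))).2 fun k => ?_
  obtain ⟨τ, hτ, hτle, hτgt⟩ := ContinuousOn.exists_last_le (u := fun r => z r k - β r) ht
    (((hz.continuousOn k).mono fun r hr => h₀.trans hr.1).sub hβc.continuousOn)
    (c := excess z β t₀) (by linarith [le_add_excess z β t₀ k])
  have hle : ∀ r ∈ Icc (T - hbar) t, ∀ k, z r k ≤ β r + B := fun r hr k => by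
    rcases le_or_gt r T with hrT | hrT
    · linarith [hhist r ⟨hr.1, hrT⟩ k]
    · exact (excess_le_iff hB0).1 (hB r ⟨hrT.le, hr.2⟩) k
  have hdrift := hz.sub_le_of_above hW hD hT hg hfg hβ (h₀.trans hτ.1) hτ.2 hB0 hle
    fun s hs => by linarith [hτgt s ⟨hs.1, hs.2.le⟩]
  have hsplit := intervalIntegral.integral_add_adjacent_intervals
    (hW.intervalIntegrable_totalWeight (hT.trans h₀) (hT.trans (h₀.trans hτ.1)))
    (hW.intervalIntegrable_totalWeight (hT.trans (h₀.trans hτ.1)) (hT.trans (h₀.trans ht)))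
  have hmono := mul_le_mul_of_nonneg_left (show (∫ s in τ..t, totalWeight a s) ≤
    ∫ s in t₀..t, totalWeight a s by linarith [hWnn h₀ hτ.1]) hB0
  linarith [hβg τ t (h₀.trans hτ.1) hτ.2]

/- Maximum principle. The excess over the barrier `M + ∫ g` satisfies the recursive inequality
of `exists_le_geometric_of_volterra` as a constant sequence, so it vanishes. -/
theorem SolvesFrom.le_add_integral (hW : Weights a) (hD : Delays h hbar) (hbar0 : 0 ≤ hbar)
    {g : ℝ → ℝ} (hz : SolvesFrom a h f T z) (hT : 0 ≤ T) (hg0 : ∀ s, 0 ≤ g s)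
    (hg : IntegrableOn g (Ioi T)) (hfg : ∀ m s, f m s ≤ g s) {M : ℝ}
    (hhist : ∀ r ∈ Icc (T - hbar) T, ∀ m, z r m ≤ M) {t : ℝ} (ht : T ≤ t) (m : V) :
    z t m ≤ M + ∫ s in T..t, g s := by
  set β : ℝ → ℝ := fun r => M + ∫ s in T..max r T, g s with hβdef
  have hgi : ∀ {c d}, T ≤ c → T ≤ d → IntervalIntegrable g volume c d :=
    hg.intervalIntegrable_of_Ioi
  have hβg : ∀ t₀ t, T ≤ t₀ → t₀ ≤ t → β t - β t₀ = ∫ s in t₀..t, g s := fun t₀ t h₀ h₁ => by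
    simp only [hβdef, max_eq_left h₀, max_eq_left (h₀.trans h₁)]
    rw [← intervalIntegral.integral_interval_sub_left (hgi le_rfl (h₀.trans h₁)) (hgi le_rfl h₀)]
    ring
  have hβ : Monotone β := fun r r' hr => by
    have hmax : ∀ r, β r = β (max r T) := fun r => by
      simp only [hβdef, max_eq_left (le_max_right r T)]
    rw [hmax r, hmax r']
    linarith [hβg _ _ (le_max_right r T) (max_le_max_right T hr),
      intervalIntegral.integral_nonneg (μ := volume) (max_le_max_right T hr) fun s _ => hg0 s]
  have hβc : Continuous β :=
    continuous_const.add (continuous_integral_max fun U hU => hgi le_rfl hU)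
  have hET : excess z β T ≤ 0 := (excess_le_iff le_rfl).2 fun k => by
    simpa [hβdef] using hhist T ⟨by linarith, le_rfl⟩ k
  have hEc : ContinuousOn (excess z β) (Icc T t) :=
    continuous_norm.comp_continuousOn <| continuousOn_pi.2 fun k =>
      ContinuousOn.sup (((hz.continuousOn k).mono Icc_subset_Ici_self).sub hβc.continuousOn)
        continuousOn_const
  obtain ⟨C, hC⟩ := isCompact_Icc.exists_bound_of_continuousOn hEc
  obtain ⟨K, -, hK⟩ := exists_le_geometric_of_volterra (D := fun _ => excess z β) (C := max C 0)
    (hW.intervalIntegrable_totalWeight hT (hT.trans ht)) (le_max_right _ _)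
    (fun r hr => (le_abs_self _).trans ((hC r hr).trans (le_max_left _ _))) (fun _ => hET)
    fun _ _ _ _ h₀ h₁ _ hB0 hB => hz.excess_le hW hD hT hg hfg hβ hβc hβg
      (fun r hr k => by simpa [hβdef, max_eq_right hr.2] using hhist r hr k) h₀ h₁ hB0 hB
  have hE : excess z β t ≤ 0 := ge_of_tendsto'
    (by simpa using (tendsto_pow_atTop_nhds_zero_of_lt_one (by norm_num : (0:ℝ) ≤ 1 / 3)
      (by norm_num)).const_mul K) fun n => hK n t ⟨ht, le_rfl⟩
  simpa [hβdef, max_eq_left ht] using (excess_le_iff le_rfl).1 hE m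

end Solutions

section Picard

variable {a h : V → V → ℝ → ℝ} {hbar T : ℝ} {φ : ℝ → V → ℝ}

noncomputable def picardIter (a h : V → V → ℝ → ℝ) (T : ℝ) (φ : ℝ → V → ℝ) :
    ℕ → ℝ → V → ℝ
  | 0 => fun t => φ (min t T)
  | n + 1 => fun t m =>
      φ (min t T) m + ∫ s in T..max t T, rhs a h (picardIter a h T φ n) m s

theorem picardIter_of_le (n : ℕ) {t : ℝ} (ht : t ≤ T) : picardIter a h T φ n t = φ t := by
  cases n <;> ext <;> simp [picardIter, min_eq_left ht, max_eq_right ht]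

theorem picardIter_succ_of_ge (n : ℕ) {t : ℝ} (ht : T ≤ t) (m : V) :
    picardIter a h T φ (n + 1) t m =
      φ T m + ∫ s in T..t, rhs a h (picardIter a h T φ n) m s := by
  simp [picardIter, min_eq_right ht, max_eq_left ht]

theorem continuous_picardIter (hW : Weights a) (hD : Delays h hbar) (hT : 0 ≤ T)
    (hφ : Continuous φ) (n : ℕ) : Continuous (picardIter a h T φ n) := by
  have hmin : Continuous fun t => φ (min t T) := hφ.comp (continuous_id.min continuous_const)
  induction n with
  | zero => exact hmin
  | succ n ih =>
    exact continuous_pi fun m => ((continuous_apply m).comp hmin).add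
      (continuous_integral_max fun U hU => intervalIntegrable_rhs hW hD ih hT (hT.trans hU) m)

theorem picardIter_succ_sub (hW : Weights a) (hD : Delays h hbar) (hT : 0 ≤ T)
    (hφ : Continuous φ) (n : ℕ) {t₀ t : ℝ} (h₀ : T ≤ t₀) (ht : t₀ ≤ t) (m : V) :
    picardIter a h T φ (n + 1) t m - picardIter a h T φ (n + 1) t₀ m =
      ∫ s in t₀..t, rhs a h (picardIter a h T φ n) m s := by
  have hi := fun r (hr : 0 ≤ r) =>
    intervalIntegrable_rhs hW hD (continuous_picardIter hW hD hT hφ n) hT hr m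
  rw [picardIter_succ_of_ge n (h₀.trans ht), picardIter_succ_of_ge n h₀,
    ← intervalIntegral.integral_interval_sub_left (hi t (hT.trans (h₀.trans ht)))
      (hi t₀ (hT.trans h₀))]
  ring

theorem norm_picardIter_sub_le (hW : Weights a) (hD : Delays h hbar) (hT : 0 ≤ T)
    (hφ : Continuous φ) (n : ℕ) {B t₀ t : ℝ} (h₀ : T ≤ t₀) (ht : t₀ ≤ t) (hB0 : 0 ≤ B)
    (hB : ∀ s ∈ Icc T t, ‖picardIter a h T φ (n + 1) s - picardIter a h T φ n s‖ ≤ B) :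
    ‖picardIter a h T φ (n + 2) t - picardIter a h T φ (n + 1) t‖ ≤
      ‖picardIter a h T φ (n + 2) t₀ - picardIter a h T φ (n + 1) t₀‖ +
        (∫ s in t₀..t, 2 * totalWeight a s) * B := by
  set p := picardIter a h T φ
  have hp := continuous_picardIter hW hD hT hφ
  have hT₀ : 0 ≤ t₀ := hT.trans h₀
  have hWi := (hW.intervalIntegrable_totalWeight hT₀ (hT₀.trans ht)).const_mul 2
  have hR : 0 ≤ ‖p (n + 2) t₀ - p (n + 1) t₀‖ + (∫ s in t₀..t, 2 * totalWeight a s) * B :=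
    add_nonneg (norm_nonneg _) (mul_nonneg (intervalIntegral.integral_nonneg ht fun s hs =>
      mul_nonneg zero_le_two (hW.totalWeight_nonneg (hT₀.trans hs.1))) hB0)
  refine (pi_norm_le_iff_of_nonneg hR).2 fun m => ?_
  have hdiff : (p (n + 2) t m - p (n + 1) t m) - (p (n + 2) t₀ m - p (n + 1) t₀ m) =
      ∫ s in t₀..t, rhs a h (p (n + 1) - p n) m s := by
    rw [sub_sub_sub_comm, picardIter_succ_sub hW hD hT hφ (n + 1) h₀ ht,
      picardIter_succ_sub hW hD hT hφ n h₀ ht, ← intervalIntegral.integral_sub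
        (intervalIntegrable_rhs hW hD (hp _) hT₀ (hT₀.trans ht) m)
        (intervalIntegrable_rhs hW hD (hp _) hT₀ (hT₀.trans ht) m)]
    simp only [rhs_sub]
    rfl
  have hint : ‖∫ s in t₀..t, rhs a h (p (n + 1) - p n) m s‖ ≤
      (∫ s in t₀..t, 2 * totalWeight a s) * B := by
    rw [← intervalIntegral.integral_mul_const]
    refine intervalIntegral.norm_integral_le_of_norm_le ht (ae_of_all _ fun s hs => ?_)
      (hWi.mul_const _)
    rw [Real.norm_eq_abs, mul_right_comm]
    refine abs_rhs_le hW hD (hT₀.trans hs.1.le) hB0 (fun r hr => ?_) m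
    rcases le_or_gt r T with hrT | hrT
    · simpa [p, picardIter_of_le _ hrT] using hB0
    · exact hB r ⟨hrT.le, hr.2.trans hs.2⟩
  have h₁ := norm_le_pi_norm (p (n + 2) t₀ - p (n + 1) t₀) m
  simp only [Pi.sub_apply, Real.norm_eq_abs] at h₁ hint ⊢
  rw [← hdiff] at hint
  linarith [abs_sub_abs_le_abs_sub (p (n + 2) t m - p (n + 1) t m)
    (p (n + 2) t₀ m - p (n + 1) t₀ m)]

theorem exists_dist_picardIter_le (hW : Weights a) (hD : Delays h hbar) (hT : 0 ≤ T)
    (hφ : Continuous φ) (U : ℝ) :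
    ∃ K, ∀ n, ∀ t ≤ U, dist (picardIter a h T φ n t) (picardIter a h T φ (n + 1) t) ≤
      K * (1 / 3) ^ n := by
  have hp := continuous_picardIter hW hD hT hφ
  obtain ⟨C, hC⟩ := isCompact_Icc.exists_bound_of_continuousOn (s := Icc T (max U T))
    ((hp 1).sub (hp 0)).continuousOn
  obtain ⟨K, hK0, hK⟩ := exists_le_geometric_of_volterra
    (D := fun n t => ‖picardIter a h T φ (n + 1) t - picardIter a h T φ n t‖)
    (w := fun s => 2 * totalWeight a s) (C := max C 0)
    ((hW.intervalIntegrable_totalWeight hT (hT.trans (le_max_right U T))).const_mul 2)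
    (le_max_right _ _) (fun t ht => (hC t ht).trans (le_max_left _ _))
    (fun n => by simp [picardIter_of_le _ le_rfl])
    fun n B t₀ t h₀ h₁ _ hB0 hB => norm_picardIter_sub_le hW hD hT hφ n h₀ h₁ hB0 hB
  refine ⟨K, fun n t htU => ?_⟩
  rw [dist_comm, dist_eq_norm]
  rcases le_or_gt t T with htT | htT
  · simpa [picardIter_of_le _ htT] using by positivity
  · exact hK n t ⟨htT.le, htU.trans (le_max_left U T)⟩

theorem exists_isSol_eqOn (hW : Weights a) (hD : Delays h hbar) (hT : 0 ≤ T)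
    (hφ : Continuous φ) : ∃ y, IsSol a h hbar T y ∧ ∀ t ≤ T, y t = φ t := by
  set p := picardIter a h T φ
  have hp := continuous_picardIter hW hD hT hφ
  choose K hK using exists_dist_picardIter_le hW hD hT hφ
  choose y hy using fun t => cauchySeq_tendsto_of_complete
    (cauchySeq_of_le_geometric _ _ (by norm_num) fun n => hK t n t le_rfl)
  have hunif : ∀ U n, ∀ t ≤ U, dist (p n t) (y t) ≤ K U * (1 / 3) ^ n / (1 - 1 / 3) :=
    fun U n t ht => dist_le_of_le_geometric_of_tendsto _ _ (by norm_num)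
      (fun n => hK U n t ht) (hy t) n
  have hε : ∀ U, Tendsto (fun n : ℕ => K U * (1 / 3) ^ n / (1 - 1 / 3)) atTop (𝓝 0) :=
    fun U => by simpa using ((tendsto_pow_atTop_nhds_zero_of_lt_one (by norm_num : (0 : ℝ) ≤ 1 / 3)
      (by norm_num)).const_mul (K U)).div_const (1 - 1 / 3)
  have hyφ : ∀ t ≤ T, y t = φ t := fun t ht =>
    tendsto_nhds_unique (hy t) (by simp only [picardIter_of_le _ ht, tendsto_const_nhds])
  have hyc : Continuous y := continuous_iff_continuousAt.2 fun t => by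
    have : TendstoUniformlyOn p y atTop (Iic (t + 1)) :=
      Metric.tendstoUniformlyOn_iff.2 fun ε hε' => ((hε (t + 1)).eventually (gt_mem_nhds hε')).mono
        fun n hn r hr => by
          rw [dist_comm]
          exact (hunif _ n r hr).trans_lt hn
    exact (this.continuousOn (Frequently.of_forall fun n => (hp n).continuousOn)).continuousAt
      (Iic_mem_nhds (by linarith))
  refine ⟨y, ⟨fun m => ((continuous_apply m).comp hyc).aestronglyMeasurable, ?_,
    fun m t ht => ⟨intervalIntegrable_rhs hW hD hyc hT (hT.trans ht) m, ?_⟩⟩, hyφ⟩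
  · obtain ⟨B, hB⟩ := isCompact_Icc.exists_bound_of_continuousOn (s := Icc (T - hbar) T)
      hyc.continuousOn
    exact ⟨B, fun s hs m => (norm_le_pi_norm (y s) m).trans (hB s hs)⟩
  · have h₁ : Tendsto (fun n => p (n + 1) t m) atTop (𝓝 (y t m)) :=
      ((continuous_apply m).tendsto _).comp ((hy t).comp (tendsto_add_atTop_nat 1))
    have h₂ := (tendsto_integral_rhs hW hD hp hyc hT ht (hε t)
      (fun n r hr => by rw [← dist_eq_norm]; exact hunif t n r hr) m).const_add (φ T m)
    simp only [← picardIter_succ_of_ge _ ht] at h₂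
    rw [tendsto_nhds_unique h₁ h₂, hyφ T le_rfl]

end Picard

section Disturbance

variable {a h : V → V → ℝ → ℝ} {hbar : ℝ} {f : V → ℝ → ℝ}

theorem IsSolF.exists_isSol_near (hW : Weights a) (hbar0 : 0 ≤ hbar) (hD : Delays h hbar)
    (hf : ∀ m, IntegrableOn (f m) (Ioi 0)) {tstar : ℝ} (htstar : 0 ≤ tstar)
    {x : ℝ → V → ℝ} (hx : IsSolF a h f hbar tstar x) {ε : ℝ} (hε : 0 < ε) :
    ∃ T ≥ 0, ∃ y, IsSol a h hbar T y ∧ ∀ t ≥ T, ∀ m, |x t m - y t m| ≤ ε := by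
  set g : ℝ → ℝ := fun s => ∑ m, |f m s|
  have hg : IntegrableOn g (Ioi 0) := integrable_finsetSum _ fun m _ => (hf m).abs
  have hg0 : ∀ s, 0 ≤ g s := fun s => Finset.sum_nonneg fun _ _ => abs_nonneg _
  have hfg : ∀ m s, |f m s| ≤ g s := fun m s =>
    Finset.single_le_sum (f := fun m => |f m s|) (fun _ _ => abs_nonneg _) (Finset.mem_univ m)
  obtain ⟨T, hTg, hT⟩ :=
    ((hg.eventually_abs_integral_le hε).and (eventually_ge_atTop (tstar + hbar))).exists
  have hT0 : 0 ≤ T := by linarith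
  have hgT : IntegrableOn g (Ioi T) := hg.mono_set (Ioi_subset_Ioi hT0)
  have hxT : SolvesFrom a h f T x := hx.solvesFrom.mono (by linarith)
  obtain ⟨y, hy, hyx⟩ := exists_isSol_eqOn (φ := fun t => x (max t (T - hbar))) hW hD hT0
    (continuous_pi fun m => (hx.solvesFrom.continuousOn m).comp_continuous
      (continuous_id.max continuous_const) fun t =>
        (show tstar ≤ T - hbar by linarith).trans (le_max_right t _))
  have hhist : ∀ r ∈ Icc (T - hbar) T, x r = y r := fun r hr => by
    rw [hyx r hr.2, max_eq_left hr.1]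
  have hup : ∀ t ≥ T, ∀ m, x t m - y t m ≤ ∫ s in T..t, g s := fun t ht m => by
    simpa using (hxT.sub hy.solvesFrom).le_add_integral hW hD hbar0 hT0 hg0 hgT
      (fun m s => by simpa using (le_abs_self (f m s)).trans (hfg m s)) (M := 0)
      (fun r hr m => by simp [hhist r hr]) ht m
  have hdown : ∀ t ≥ T, ∀ m, y t m - x t m ≤ ∫ s in T..t, g s := fun t ht m => by
    simpa using (hy.solvesFrom.sub hxT).le_add_integral hW hD hbar0 hT0 hg0 hgT
      (fun m s => by simpa using (neg_le_abs (f m s)).trans (hfg m s)) (M := 0)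
      (fun r hr m => by simp [hhist r hr]) ht m
  refine ⟨T, hT0, y, hy, fun t ht m => abs_le.2 ⟨?_, ?_⟩⟩ <;>
    linarith [hup t ht m, hdown t ht m, le_abs_self (∫ s in T..t, g s), hTg t ht]

end Disturbance

theorem stmt7
    (a : V → V → ℝ → ℝ) (hW : Weights a)
    (hbar : ℝ) (hbar0 : 0 ≤ hbar) (h : V → V → ℝ → ℝ) (hD : Delays h hbar)
    (i j : V)
    (hcons : ∀ tstar ≥ (0:ℝ), ∀ x : ℝ → V → ℝ, IsSol a h hbar tstar x →
      ∃ c : ℝ, Tendsto (fun t => x t i) atTop (𝓝 c) ∧ Tendsto (fun t => x t j) atTop (𝓝 c))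
    (f : V → ℝ → ℝ) (hf : ∀ m : V, Measurable (f m) ∧ IntegrableOn (f m) (Ioi 0)) :
    ∀ tstar ≥ (0:ℝ), ∀ x : ℝ → V → ℝ, IsSolF a h f hbar tstar x →
      ∃ c : ℝ, Tendsto (fun t => x t i) atTop (𝓝 c) ∧
        Tendsto (fun t => x t j) atTop (𝓝 c) := by
  intro tstar htstar x hx
  refine exists_tendsto_of_forall_eventually_dist_lt fun ε hε => ?_
  obtain ⟨T, hT, y, hy, hxy⟩ :=
    hx.exists_isSol_near hW hbar0 hD (fun m => (hf m).2) htstar (half_pos hε)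
  obtain ⟨c, hci, hcj⟩ := hcons T hT y hy
  refine ⟨c, ?_⟩
  filter_upwards [eventually_ge_atTop T, Metric.tendsto_nhds.1 hci _ (half_pos hε),
    Metric.tendsto_nhds.1 hcj _ (half_pos hε)] with t ht hti htj
  constructor
  · linarith [dist_triangle (x t i) (y t i) c, Real.dist_eq (x t i) (y t i), hxy t ht i]
  · linarith [dist_triangle (x t j) (y t j) c, Real.dist_eq (x t j) (y t j), hxy t ht j]
end

section
/- Fix measurable locally integrable weights a_ij (i,j ∈ V), attraction gains b_ik : [0,∞) → [0,∞) (i ∈ V, k ∈ V_L), and measurable delays h_ij(t) ∈ [0,h̄], and set d_i(t) = Σ_{k∈V_L} b_ik(t). The containment control algorithm provides containment — i.e., for every dimension m ≥ 1, every choice of fixed leader positions x_k ∈ ℝ^m (k ∈ V_L) and every solution of the containment dynamics, dist(x_i(t), conv{x_k : k ∈ V_L}) → 0 as t → ∞ for all i ∈ V — if and only if the damped averaging dynamics with gains d_i are asymptotically stable, i.e., every scalar solution of the damped dynamics converges to 0. -/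
open MeasureTheory Filter Topology Set

variable {V : Type*} [Fintype V] [DecidableEq V]

/-- Admissible damping gains. -/
def Gains (d : V → ℝ → ℝ) : Prop :=
  ∀ i : V, Measurable (d i) ∧ (∀ t ≥ (0:ℝ), 0 ≤ d i t) ∧
    ∀ T : ℝ, IntegrableOn (d i) (Icc 0 T)

/-- Right-hand side of the damped averaging dynamics. -/
def rhsDamp (a h : V → V → ℝ → ℝ) (d : V → ℝ → ℝ) (x : ℝ → V → ℝ) (i : V) (s : ℝ) : ℝ :=
  -(d i s * x s i) + ∑ j ∈ Finset.univ.erase i, a i j s * (x (s - h i j s) j - x s i)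

/-- A solution of the damped averaging dynamics. -/
def IsSolDamp (a h : V → V → ℝ → ℝ) (d : V → ℝ → ℝ) (hbar tstar : ℝ) (x : ℝ → V → ℝ) : Prop :=
  (∀ i : V, AEStronglyMeasurable (fun s => x s i) (volume.restrict (Icc (tstar - hbar) tstar))) ∧
  (∃ M : ℝ, ∀ s ∈ Icc (tstar - hbar) tstar, ∀ i : V, |x s i| ≤ M) ∧
  ∀ i : V, ∀ t ≥ tstar,
    IntervalIntegrable (rhsDamp a h d x i) volume tstar t ∧
    x t i = x tstar i + ∫ s in tstar..t, rhsDamp a h d x i s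

variable {W : Type*} [Fintype W]

/-- Admissible attraction gains towards the leaders. -/
def BGains (b : V → W → ℝ → ℝ) : Prop :=
  ∀ i : V, ∀ k : W, Measurable (b i k) ∧ (∀ t ≥ (0:ℝ), 0 ≤ b i k t) ∧
    ∀ T : ℝ, IntegrableOn (b i k) (Icc 0 T)

/-- Right-hand side of the containment-control dynamics with fixed leader positions `xL`. -/
noncomputable def rhsCont (m : ℕ) (a h : V → V → ℝ → ℝ) (b : V → W → ℝ → ℝ)
    (xL : W → EuclideanSpace ℝ (Fin m)) (x : ℝ → V → EuclideanSpace ℝ (Fin m))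
    (i : V) (s : ℝ) : EuclideanSpace ℝ (Fin m) :=
  (∑ j ∈ Finset.univ.erase i, a i j s • (x (s - h i j s) j - x s i)) +
    ∑ k : W, b i k s • (xL k - x s i)

/-- A solution of the containment-control dynamics. -/
def IsSolCont (m : ℕ) (a h : V → V → ℝ → ℝ) (b : V → W → ℝ → ℝ)
    (xL : W → EuclideanSpace ℝ (Fin m)) (hbar tstar : ℝ)
    (x : ℝ → V → EuclideanSpace ℝ (Fin m)) : Prop :=
  (∀ i : V, AEStronglyMeasurable (fun s => x s i) (volume.restrict (Icc (tstar - hbar) tstar))) ∧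
  (∃ M : ℝ, ∀ s ∈ Icc (tstar - hbar) tstar, ∀ i : V, ‖x s i‖ ≤ M) ∧
  ∀ i : V, ∀ t ≥ tstar,
    IntervalIntegrable (rhsCont m a h b xL x i) volume tstar t ∧
    x t i = x tstar i + ∫ s in tstar..t, rhsCont m a h b xL x i s

/-!
Along a linear functional `f` with `f ≤ M` at the leaders, `M - f ∘ x` is a supersolution of the
damped dynamics with gains `dᵢ = ∑ₖ bᵢₖ`. Adding a damped solution `z` that dominates `f ∘ x - M`
on the initial window gives a supersolution that is nonnegative there, hence for all later times by
a comparison principle, proved piecewise on intervals where the weights have integral at most `1/2`.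
So `f ∘ x ≤ M + z` with `z → 0`: the followers eventually enter every open half-space containing
the leaders, which forces their distance to the compact convex hull to vanish. Conversely, a scalar
damped solution placed on a line, with all leaders at the origin, solves the containment dynamics.
-/

open scoped BoundedContinuousFunction

section Primitive

variable {E : Type*} [NormedAddCommGroup E] [NormedSpace ℝ E]

def IsPrimitiveOn (g x : ℝ → E) (a b : ℝ) : Prop :=
  ∀ t ∈ Icc a b, IntervalIntegrable g volume a t ∧ x t = x a + ∫ s in a..t, g s

namespace IsPrimitiveOn

variable {g g' x x' : ℝ → E} {a b c s t : ℝ}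

theorem mono (hx : IsPrimitiveOn g x a b) (hcb : c ≤ b) : IsPrimitiveOn g x a c :=
  fun t ht => hx t ⟨ht.1, ht.2.trans hcb⟩

theorem intervalIntegrable (hx : IsPrimitiveOn g x a b) (has : a ≤ s) (hst : s ≤ t)
    (htb : t ≤ b) : IntervalIntegrable g volume s t :=
  (hx s ⟨has, hst.trans htb⟩).1.symm.trans (hx t ⟨has.trans hst, htb⟩).1

theorem integral_eq_sub (hx : IsPrimitiveOn g x a b) (has : a ≤ s) (hst : s ≤ t)
    (htb : t ≤ b) : ∫ u in s..t, g u = x t - x s := by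
  obtain ⟨hIs, hxs⟩ := hx s ⟨has, hst.trans htb⟩
  obtain ⟨hIt, hxt⟩ := hx t ⟨has.trans hst, htb⟩
  rw [← intervalIntegral.integral_interval_sub_left hIt hIs, hxt, hxs]
  abel

theorem trans (hab : IsPrimitiveOn g x a b) (hbc : IsPrimitiveOn g x b c) (h : a ≤ b) :
    IsPrimitiveOn g x a c := by
  intro t ht
  rcases le_total t b with htb | hbt
  · exact hab t ⟨ht.1, htb⟩
  obtain ⟨hIab, hxb⟩ := hab b ⟨h, le_rfl⟩
  obtain ⟨hIbt, hxt⟩ := hbc t ⟨hbt, ht.2⟩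
  refine ⟨hIab.trans hIbt, ?_⟩
  rw [hxt, hxb, add_assoc, intervalIntegral.integral_add_adjacent_intervals hIab hIbt]

theorem congr (hx : IsPrimitiveOn g x a b) (hg : EqOn g g' (Icc a b))
    (hxx : EqOn x x' (Icc a b)) : IsPrimitiveOn g' x' a b := by
  intro t ht
  have hsub : uIcc a t ⊆ Icc a b := by
    rw [uIcc_of_le ht.1]
    exact Icc_subset_Icc_right ht.2
  obtain ⟨hI, hxt⟩ := hx t ht
  refine ⟨hI.congr (hg.mono (uIoc_subset_uIcc.trans hsub)), ?_⟩
  rw [← hxx ht, ← hxx (left_mem_Icc.2 (ht.1.trans ht.2)), hxt,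
    intervalIntegral.integral_congr (hg.mono hsub)]

theorem map [CompleteSpace E] {F : Type*} [NormedAddCommGroup F] [NormedSpace ℝ F]
    [CompleteSpace F] (hx : IsPrimitiveOn g x a b) (f : E →L[ℝ] F) :
    IsPrimitiveOn (fun s => f (g s)) (fun t => f (x t)) a b := by
  intro t ht
  obtain ⟨hI, hxt⟩ := hx t ht
  exact ⟨⟨f.integrable_comp hI.1, f.integrable_comp hI.2⟩,
    by simp only [hxt, map_add, f.intervalIntegral_comp_comm hI]⟩

theorem continuousOn (hx : IsPrimitiveOn g x a b) : ContinuousOn x (Icc a b) := by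
  rcases lt_or_ge b a with hba | hab
  · rw [Icc_eq_empty_of_lt hba]
    exact continuousOn_empty x
  have hprim := intervalIntegral.continuousOn_primitive_interval
    ((intervalIntegrable_iff').1 (hx b ⟨hab, le_rfl⟩).1)
  rw [uIcc_of_le hab] at hprim
  exact (continuousOn_const.add hprim).congr fun t ht => (hx t ht).2

end IsPrimitiveOn

end Primitive

theorem exists_monotone_integral_le_half {L : ℝ → ℝ}
    (hL : ∀ u v, IntervalIntegrable L volume u v) (hL0 : ∀ s, 0 ≤ L s) (t₀ : ℝ) :
    ∃ T : ℕ → ℝ, T 0 = t₀ ∧ Monotone T ∧ Tendsto T atTop atTop ∧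
      ∀ k, ∫ s in T k..T (k + 1), L s ≤ 1 / 2 := by
  -- `T k` is where the strictly increasing map `Q t = t + ∫_{t₀}^t L` reaches `t₀ + k / 2`.
  set Q : ℝ → ℝ := fun t => t + ∫ s in t₀..t, L s with hQ_def
  have hQ_sub : ∀ u v, Q v - Q u = (v - u) + ∫ s in u..v, L s := fun u v => by
    rw [← intervalIntegral.integral_interval_sub_left (hL t₀ v) (hL t₀ u)]
    ring
  have hQ : StrictMono Q := fun u v huv => by
    have := intervalIntegral.integral_nonneg (μ := volume) huv.le fun s _ => hL0 s
    linarith [hQ_sub u v]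
  have hQ₀ : Q t₀ = t₀ := by simp [hQ_def]
  have hex : ∀ k : ℕ, ∃ t, Q t = t₀ + k / 2 := fun k => by
    have hk : t₀ ≤ t₀ + k / 2 := le_add_of_nonneg_right (by positivity)
    have hint := intervalIntegral.integral_nonneg (μ := volume) hk fun s _ => hL0 s
    have hmem : t₀ + k / 2 ∈ Icc (Q t₀) (Q (t₀ + k / 2)) :=
      ⟨hQ₀.symm ▸ hk, le_add_of_nonneg_right hint⟩
    obtain ⟨t, -, ht⟩ := intermediate_value_Icc hk
      (continuous_id.add (intervalIntegral.continuous_primitive hL t₀)).continuousOn hmem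
    exact ⟨t, ht⟩
  choose T hT using hex
  have hTmono : Monotone T := fun k l hkl => hQ.le_iff_le.1 <| by
    rw [hT, hT]
    gcongr
  refine ⟨T, hQ.injective (by rw [hT, hQ₀]; simp), hTmono, ?_, fun k => ?_⟩
  · refine hTmono.tendsto_atTop_atTop fun B => ?_
    obtain ⟨k, hk⟩ := exists_nat_gt (2 * (Q B - t₀))
    refine ⟨k, (hQ.lt_iff_lt.1 ?_).le⟩
    rw [hT]
    linarith
  · have := hQ_sub (T k) (T (k + 1))
    rw [hT, hT] at this
    push_cast at this
    linarith [hTmono k.le_succ]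

theorem exists_monotone_forall_integral_le_half {ι : Type*} [Fintype ι] {L : ι → ℝ → ℝ}
    (hL : ∀ i u v, IntervalIntegrable (L i) volume u v) (hL0 : ∀ i s, 0 ≤ L i s) (t₀ : ℝ) :
    ∃ T : ℕ → ℝ, T 0 = t₀ ∧ Monotone T ∧ Tendsto T atTop atTop ∧
      ∀ k i, ∫ s in T k..T (k + 1), L i s ≤ 1 / 2 := by
  have hsum : ∀ u v, IntervalIntegrable (fun s => ∑ i, L i s) volume u v := fun u v => by
    simpa only [← Finset.sum_apply] using IntervalIntegrable.sum Finset.univ fun i _ => hL i u v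
  obtain ⟨T, hT₀, hT, hTtop, hTint⟩ := exists_monotone_integral_le_half hsum
    (fun s => Finset.sum_nonneg fun i _ => hL0 i s) t₀
  refine ⟨T, hT₀, hT, hTtop, fun k i => le_trans ?_ (hTint k)⟩
  exact intervalIntegral.integral_mono_on (hT k.le_succ) (hL i _ _) (hsum _ _) fun s _ =>
    Finset.single_le_sum (fun j _ => hL0 j s) (Finset.mem_univ i)

theorem exists_eq_of_eq_on_Iic_succ {X : Type*} {T : ℕ → ℝ} (hT : Monotone T)
    (hTtop : Tendsto T atTop atTop) {G : ℕ → ℝ → X} (hG : ∀ k, ∀ s ≤ T k, G (k + 1) s = G k s) :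
    ∃ y : ℝ → X, ∀ k, ∀ s ≤ T k, y s = G k s := by
  have hstable : ∀ k l, k ≤ l → ∀ s ≤ T k, G l s = G k s := by
    intro k l hkl
    induction l, hkl using Nat.le_induction with
    | base => exact fun _ _ => rfl
    | succ l hkl ih => exact fun s hs => (hG l s (hs.trans (hT hkl))).trans (ih s hs)
  choose n hn using fun s => (hTtop.eventually_ge_atTop s).exists
  refine ⟨fun s => G (n s) s, fun k s hs => ?_⟩
  rcases le_total (n s) k with h | h
  · exact (hstable _ _ h s (hn s)).symm
  · exact hstable _ _ h s hs

theorem exists_nonneg_forall_Ioc_neg {f : ℝ → ℝ} {a b : ℝ} (hab : a ≤ b)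
    (hf : ContinuousOn f (Icc a b)) (ha : 0 ≤ f a) :
    ∃ c ∈ Icc a b, 0 ≤ f c ∧ ∀ s ∈ Ioc c b, f s < 0 := by
  set S := Icc a b ∩ f ⁻¹' Ici 0
  have hS : IsClosed S := hf.preimage_isClosed_of_isClosed isClosed_Icc isClosed_Ici
  have hbdd : BddAbove S := ⟨b, fun s hs => hs.1.2⟩
  obtain ⟨hc, hfc⟩ := hS.csSup_mem ⟨a, left_mem_Icc.2 hab, ha⟩ hbdd
  refine ⟨sSup S, hc, hfc, fun s hs => ?_⟩
  by_contra! hfs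
  exact (le_csSup hbdd ⟨⟨hc.1.trans hs.1.le, hs.2⟩, hfs⟩).not_gt hs.1

theorem tendsto_infDist_of_eventually_lt {E : Type*} [NormedAddCommGroup E] [NormedSpace ℝ E]
    [FiniteDimensional ℝ E] {α : Type*} {l : Filter α} {C : Set E} (hCb : Bornology.IsBounded C)
    (hCc : Convex ℝ C) {u : α → E}
    (hu : ∀ (f : E →L[ℝ] ℝ) (c : ℝ), (∀ y ∈ C, f y < c) → ∀ᶠ t in l, f (u t) < c) :
    Tendsto (fun t => Metric.infDist (u t) C) l (𝓝 0) := by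
  rcases C.eq_empty_or_nonempty with rfl | ⟨y₀, hy₀⟩
  · simp only [Metric.infDist_empty, tendsto_const_nhds]
  refine tendsto_order.2 ⟨fun ε hε => Eventually.of_forall fun t =>
    hε.trans_le Metric.infDist_nonneg, fun ε hε => ?_⟩
  -- Cover the compact level set `{q | infDist q C = ε}` by finitely many open half-spaces
  -- missing `C`; their intersection is a convex set containing `C`, which cannot reach that
  -- level set by connectedness.
  set S := {q : E | Metric.infDist q C = ε}
  have hS : IsCompact S := by
    refine Metric.isCompact_of_isClosed_isBounded
      (isClosed_eq (Metric.continuous_infDist_pt C) continuous_const)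
      ((hCb.thickening (δ := ε + 1)).subset fun q hq => ?_)
    rw [Metric.mem_thickening_iff_infDist_lt ⟨y₀, hy₀⟩, hq]
    linarith
  have hsep : ∀ q ∈ S, ∃ (f : E →L[ℝ] ℝ) (c : ℝ), (∀ y ∈ C, f y < c) ∧ c < f q := by
    intro q hq
    have hq' : q ∉ closure C := by
      rw [Metric.mem_closure_iff_infDist_zero ⟨y₀, hy₀⟩, hq]
      exact hε.ne'
    obtain ⟨f, c, hfC, hfq⟩ := geometric_hahn_banach_closed_point hCc.closure isClosed_closure hq'
    exact ⟨f, c, fun y hy => hfC y (subset_closure hy), hfq⟩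
  choose! f c hfC hfq using hsep
  obtain ⟨F, hFS, hF, hSF⟩ := hS.elim_finite_subcover_image (c := fun q => {p | c q < f q p})
    (fun q _ => isOpen_lt continuous_const (f q).continuous) fun q hq =>
      mem_iUnion₂.2 ⟨q, hq, hfq q hq⟩
  have hev : ∀ᶠ t in l, ∀ q ∈ F, f q (u t) < c q :=
    (hF.eventually_all).2 fun q hq => hu (f q) (c q) (hfC q (hFS hq))
  filter_upwards [hev] with t ht
  set P := ⋂ q ∈ F, {p | f q p < c q}
  have hP : Convex ℝ P :=
    convex_iInter₂ fun q _ => convex_halfSpace_lt (f q).toLinearMap.isLinear (c q)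
  have hCP : C ⊆ P := fun y hy => mem_iInter₂.2 fun q hq => hfC q (hFS hq) y hy
  by_contra! hεt
  obtain ⟨p, hpP, hpS⟩ := hP.isPreconnected.intermediate_value (hCP hy₀)
    (mem_iInter₂.2 ht) (Metric.continuous_infDist_pt C).continuousOn
    ⟨(Metric.infDist_zero_of_mem hy₀).symm ▸ hε.le, hεt⟩
  obtain ⟨q, hq, hpq⟩ := mem_iUnion₂.1 (hSF hpS)
  have hpq' : f q p < c q := mem_iInter₂.1 hpP q hq
  exact hpq'.not_gt hpq

section Damped

variable {a h : V → V → ℝ → ℝ} {d : V → ℝ → ℝ} {hbar : ℝ}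

def inDegree (a : V → V → ℝ → ℝ) (i : V) (s : ℝ) : ℝ :=
  ∑ j ∈ Finset.univ.erase i, a i j s

/-- The Lipschitz constant of `rhsDamp · i s` for the sup norm, cut off at negative times, where the
weights need not be integrable. -/
noncomputable def lipRate (a : V → V → ℝ → ℝ) (d : V → ℝ → ℝ) (i : V) : ℝ → ℝ :=
  (Ici 0).indicator fun s => d i s + 2 * inDegree a i s

theorem Weights.inDegree_nonneg (hW : Weights a) (i : V) {s : ℝ} (hs : 0 ≤ s) :
    0 ≤ inDegree a i s :=
  Finset.sum_nonneg fun j hj => (hW i j (Finset.ne_of_mem_erase hj).symm).2.1 s hs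

theorem lipRate_of_nonneg (i : V) {s : ℝ} (hs : 0 ≤ s) :
    lipRate a d i s = d i s + 2 * inDegree a i s :=
  indicator_of_mem (mem_Ici.2 hs) _

theorem lipRate_nonneg (hW : Weights a) (hd : Gains d) (i : V) (s : ℝ) : 0 ≤ lipRate a d i s :=
  indicator_nonneg (fun s hs => add_nonneg ((hd i).2.1 s hs)
    (mul_nonneg zero_le_two (hW.inDegree_nonneg i hs))) s

theorem integrableOn_lipRate (hW : Weights a) (hd : Gains d) (i : V) (u v : ℝ) :
    IntegrableOn (lipRate a d i) (Icc u v) := by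
  have hF : IntegrableOn (fun s => d i s + 2 * inDegree a i s) (Icc 0 v) :=
    ((hd i).2.2 v).add ((integrable_finsetSum _ fun j hj =>
      (hW i j (Finset.ne_of_mem_erase hj).symm).2.2 v).const_mul 2)
  refine (integrable_indicator_iff measurableSet_Ici).2 ?_
  rw [IntegrableOn, Measure.restrict_restrict measurableSet_Ici]
  exact hF.mono_set fun s hs => ⟨hs.1, hs.2.2⟩

theorem intervalIntegrable_lipRate (hW : Weights a) (hd : Gains d) (i : V) (u v : ℝ) :
    IntervalIntegrable (lipRate a d i) volume u v :=
  (integrableOn_lipRate hW hd i _ _).intervalIntegrable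

theorem measurable_rhsDamp (hW : Weights a) (hd : Gains d) (hD : Delays h hbar)
    {y : ℝ → V → ℝ} (hy : Measurable y) (i : V) : Measurable (rhsDamp a h d y i) := by
  have hyj : ∀ j, Measurable fun s => y s j := fun j => (measurable_pi_apply j).comp hy
  refine ((hd i).1.mul (hyj i)).neg.add (Finset.measurable_sum _ fun j hj => ?_)
  exact (hW i j (Finset.ne_of_mem_erase hj).symm).1.mul
    (((hyj j).comp (measurable_id.sub (hD i j).1)).sub (hyj i))

theorem abs_rhsDamp_le (hW : Weights a) (hd : Gains d) {y : ℝ → V → ℝ} {B : ℝ}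
    (hy : ∀ s, ‖y s‖ ≤ B) (i : V) {s : ℝ} (hs : 0 ≤ s) :
    |rhsDamp a h d y i s| ≤ lipRate a d i s * B := by
  have hyB : ∀ u j, |y u j| ≤ B := fun u j => (norm_le_pi_norm (y u) j).trans (hy u)
  calc |rhsDamp a h d y i s|
      ≤ |d i s * y s i| + ∑ j ∈ Finset.univ.erase i, |a i j s * (y (s - h i j s) j - y s i)| :=
        (abs_add_le _ _).trans (by rw [abs_neg]; gcongr; exact Finset.abs_sum_le_sum_abs _ _)
    _ ≤ d i s * B + ∑ j ∈ Finset.univ.erase i, a i j s * (2 * B) := by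
        refine add_le_add ?_ (Finset.sum_le_sum fun j hj => ?_)
        · rw [abs_mul, abs_of_nonneg ((hd i).2.1 s hs)]
          exact mul_le_mul_of_nonneg_left (hyB s i) ((hd i).2.1 s hs)
        · have ha := (hW i j (Finset.ne_of_mem_erase hj).symm).2.1 s hs
          rw [abs_mul, abs_of_nonneg ha]
          refine mul_le_mul_of_nonneg_left ?_ ha
          linarith [abs_sub (y (s - h i j s) j) (y s i), hyB (s - h i j s) j, hyB s i]
    _ = lipRate a d i s * B := by
        rw [lipRate_of_nonneg i hs, inDegree, ← Finset.sum_mul]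
        ring

theorem integrableOn_rhsDamp (hW : Weights a) (hd : Gains d) (hD : Delays h hbar)
    {y : ℝ → V → ℝ} (hy : Measurable y) {B : ℝ} (hyB : ∀ s, ‖y s‖ ≤ B) (i : V) {u v : ℝ}
    (hu : 0 ≤ u) : IntegrableOn (rhsDamp a h d y i) (Icc u v) :=
  ((integrableOn_lipRate hW hd i u v).mul_const B).mono'
    (measurable_rhsDamp hW hd hD hy i).aestronglyMeasurable
    ((ae_restrict_iff' measurableSet_Icc).2 (Eventually.of_forall fun _ hs =>
      abs_rhsDamp_le hW hd hyB i (hu.trans hs.1)))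

theorem rhsDamp_add (y z : ℝ → V → ℝ) (i : V) (s : ℝ) :
    rhsDamp a h d (y + z) i s = rhsDamp a h d y i s + rhsDamp a h d z i s := by
  simp only [rhsDamp, Pi.add_apply]
  rw [add_add_add_comm, ← Finset.sum_add_distrib]
  exact congrArg₂ _ (by ring) (Finset.sum_congr rfl fun j _ => by ring)

theorem rhsDamp_sub (y z : ℝ → V → ℝ) (i : V) (s : ℝ) :
    rhsDamp a h d (y - z) i s = rhsDamp a h d y i s - rhsDamp a h d z i s := by
  simp only [rhsDamp, Pi.sub_apply]
  rw [add_sub_add_comm, ← Finset.sum_sub_distrib]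
  exact congrArg₂ _ (by ring) (Finset.sum_congr rfl fun j _ => by ring)

theorem rhsDamp_congr (hD : Delays h hbar) {y z : ℝ → V → ℝ} {R : ℝ} (hyz : ∀ u ≤ R, y u = z u)
    (i : V) {s : ℝ} (hs : 0 ≤ s) (hsR : s ≤ R) : rhsDamp a h d y i s = rhsDamp a h d z i s := by
  simp only [rhsDamp, hyz s hsR]
  refine congrArg _ (Finset.sum_congr rfl fun j _ => ?_)
  rw [hyz _ (by linarith [((hD i j).2 s hs).1])]

theorem mul_lipRate_le_rhsDamp (hW : Weights a) (hd : Gains d) {w : ℝ → V → ℝ} {i : V}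
    {s m : ℝ} (hs : 0 ≤ s) (hm : m ≤ 0) (hwi : w s i ≤ 0) (hdel : ∀ j, m ≤ w (s - h i j s) j) :
    m * lipRate a d i s ≤ rhsDamp a h d w i s := by
  have hd0 := (hd i).2.1 s hs
  have hA := hW.inDegree_nonneg i hs
  have hsum : m * inDegree a i s ≤
      ∑ j ∈ Finset.univ.erase i, a i j s * (w (s - h i j s) j - w s i) := by
    rw [inDegree, Finset.mul_sum]
    refine Finset.sum_le_sum fun j hj => ?_
    have := (hW i j (Finset.ne_of_mem_erase hj).symm).2.1 s hs
    nlinarith [hdel j]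
  rw [lipRate_of_nonneg i hs, rhsDamp]
  nlinarith [mul_nonpos_of_nonneg_of_nonpos hd0 hm, mul_nonpos_of_nonneg_of_nonpos hA hm,
    mul_nonpos_of_nonneg_of_nonpos hd0 hwi]

end Damped

section Glue

variable {X : Type*} [NormedAddCommGroup X] {σ τ : ℝ}

noncomputable def glue (hστ : σ ≤ τ) (g : ℝ → X) (u : C(Icc σ τ, X)) (s : ℝ) : X :=
  if σ ≤ s then IccExtend hστ u s else g s

theorem measurable_glue [MeasurableSpace X] [BorelSpace X] (hστ : σ ≤ τ) {g : ℝ → X}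
    (hg : Measurable g) (u : C(Icc σ τ, X)) : Measurable (glue hστ g u) :=
  Measurable.ite measurableSet_Ici (continuous_IccExtend_iff.2 u.continuous).measurable hg

theorem norm_glue_le (hστ : σ ≤ τ) {g : ℝ → X} {B : ℝ} (hg : ∀ s, ‖g s‖ ≤ B)
    (u : C(Icc σ τ, X)) (s : ℝ) : ‖glue hστ g u s‖ ≤ max B ‖u‖ := by
  unfold glue
  split_ifs
  · exact (u.norm_coe_le_norm _).trans (le_max_right _ _)
  · exact (hg s).trans (le_max_left _ _)

theorem norm_glue_sub_le (hστ : σ ≤ τ) (g : ℝ → X) (u v : C(Icc σ τ, X)) (s : ℝ) :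
    ‖(glue hστ g u - glue hστ g v) s‖ ≤ dist u v := by
  simp only [Pi.sub_apply, glue]
  split_ifs
  · exact (dist_eq_norm _ _).symm.trans_le (ContinuousMap.dist_apply_le_dist _)
  · simp [dist_nonneg]

theorem continuous_glue (hστ : σ ≤ τ) {g : ℝ → X} (hg : Continuous g)
    {u : C(Icc σ τ, X)} (hu : u ⟨σ, left_mem_Icc.2 hστ⟩ = g σ) :
    Continuous (glue hστ g u) :=
  Continuous.if_le (continuous_IccExtend_iff.2 u.continuous) hg continuous_const continuous_id
    fun s hs => by rw [← hs, IccExtend_left, hu]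

theorem glue_of_le (hστ : σ ≤ τ) {g : ℝ → X} {u : C(Icc σ τ, X)}
    (hu : u ⟨σ, left_mem_Icc.2 hστ⟩ = g σ) {s : ℝ} (hs : s ≤ σ) : glue hστ g u s = g s := by
  unfold glue
  split_ifs with hσs
  · rw [le_antisymm hs hσs, IccExtend_left, hu]
  · rfl

end Glue

section Picard

variable {a h : V → V → ℝ → ℝ} {d : V → ℝ → ℝ} {hbar : ℝ} {σ τ : ℝ}

/-- Picard iteration: as `lipRate` has integral at most `1 / 2` on `[σ, τ]`, the integral operator
is a `1 / 2`-contraction of `C(Icc σ τ, V → ℝ)`. -/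
theorem exists_extension_isPrimitiveOn (hW : Weights a) (hd : Gains d) (hD : Delays h hbar)
    (hστ : σ ≤ τ) (hσ : 0 ≤ σ) (hsmall : ∀ i, ∫ s in σ..τ, lipRate a d i s ≤ 1 / 2)
    (g : ℝ →ᵇ (V → ℝ)) :
    ∃ g' : ℝ →ᵇ (V → ℝ), (∀ s ≤ σ, g' s = g s) ∧
      ∀ i, IsPrimitiveOn (rhsDamp a h d g' i) (fun t => g' t i) σ τ := by
  set G := glue hστ g with hG
  have hint : ∀ u i, IntegrableOn (rhsDamp a h d (G u) i) (Icc σ τ) := fun u i =>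
    integrableOn_rhsDamp hW hd hD (measurable_glue hστ g.continuous.measurable u)
      (norm_glue_le hστ g.norm_coe_le_norm u) i hσ
  have hII : ∀ u i, ∀ t ∈ Icc σ τ, IntervalIntegrable (rhsDamp a h d (G u) i) volume σ t :=
    fun u i t ht => by
      refine ((hint u i).mono_set ?_).intervalIntegrable
      rw [uIcc_of_le ht.1]
      exact Icc_subset_Icc_right ht.2
  have hcont : ∀ u i, ContinuousOn (fun t => ∫ s in σ..t, rhsDamp a h d (G u) i s) (Icc σ τ) :=
    fun u i => by
      have := intervalIntegral.continuousOn_primitive_interval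
        (by rw [uIcc_of_le hστ]; exact hint u i)
      rwa [uIcc_of_le hστ] at this
  let Φ : C(Icc σ τ, V → ℝ) → C(Icc σ τ, V → ℝ) := fun u =>
    ⟨fun t i => g σ i + ∫ s in σ..t, rhsDamp a h d (G u) i s, continuous_pi fun i =>
      continuous_const.add ((hcont u i).comp_continuous continuous_subtype_val Subtype.prop)⟩
  have hΦ : ContractingWith (1 / 2) Φ := by
    refine ⟨by norm_num, LipschitzWith.of_dist_le_mul fun u v => ?_⟩
    rw [ContinuousMap.dist_le (by positivity)]
    refine fun t => (dist_pi_le_iff (by positivity)).2 fun i => ?_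
    have hLI := (intervalIntegrable_lipRate hW hd i σ τ).mul_const (dist u v)
    calc dist (Φ u t i) (Φ v t i) = ‖∫ s in σ..t, rhsDamp a h d (G u - G v) i s‖ := by
          simp only [Φ, ContinuousMap.coe_mk, dist_eq_norm, add_sub_add_left_eq_sub, rhsDamp_sub,
            intervalIntegral.integral_sub (hII u i t t.2) (hII v i t t.2)]
      _ ≤ ∫ s in σ..t, lipRate a d i s * dist u v :=
          intervalIntegral.norm_integral_le_of_norm_le t.2.1 (Eventually.of_forall fun s hs =>
            abs_rhsDamp_le hW hd (norm_glue_sub_le hστ g u v) i (hσ.trans hs.1.le))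
            (hLI.mono_set (by
              rw [uIcc_of_le t.2.1, uIcc_of_le hστ]
              exact Icc_subset_Icc_right t.2.2))
      _ ≤ ∫ s in σ..τ, lipRate a d i s * dist u v :=
          intervalIntegral.integral_mono_interval le_rfl t.2.1 t.2.2
            (Eventually.of_forall fun s => mul_nonneg (lipRate_nonneg hW hd i s) dist_nonneg) hLI
      _ ≤ ↑(1 / 2 : NNReal) * dist u v := by
          rw [intervalIntegral.integral_mul_const]
          exact mul_le_mul_of_nonneg_right (by simpa using hsmall i) dist_nonneg
  set u := ContractingWith.fixedPoint Φ hΦ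
  have hu : ∀ (t : Icc σ τ) i, u t i = g σ i + ∫ s in σ..t, rhsDamp a h d (G u) i s :=
    fun t i => by
      have hfix : Φ u = u := hΦ.fixedPoint_isFixedPt
      conv_lhs => rw [← hfix]
      rfl
  have huσ : u ⟨σ, left_mem_Icc.2 hστ⟩ = g σ := funext fun i => by simp [hu]
  refine ⟨.ofNormedAddCommGroup (G u) (continuous_glue hστ g.continuous huσ) _
    (norm_glue_le hστ g.norm_coe_le_norm u), fun s hs => glue_of_le hστ huσ hs,
    fun i t ht => ⟨hII u i t ht, ?_⟩⟩
  change G u t i = G u σ i + ∫ s in σ..t, rhsDamp a h d (G u) i s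
  have hGt : G u t = u ⟨t, ht⟩ := by rw [hG, glue, if_pos ht.1, IccExtend_of_mem hστ u ht]
  rw [hGt, show G u σ = g σ from glue_of_le hστ huσ le_rfl, hu]

end Picard

section Existence

variable {a h : V → V → ℝ → ℝ} {d : V → ℝ → ℝ} {hbar tstar : ℝ}

theorem IsPrimitiveOn.congr_rhsDamp (hD : Delays h hbar) {y z : ℝ → V → ℝ} {t₀ R : ℝ}
    (ht₀ : 0 ≤ t₀) (hyz : ∀ u ≤ R, y u = z u) {i : V}
    (hz : IsPrimitiveOn (rhsDamp a h d z i) (fun t => z t i) t₀ R) :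
    IsPrimitiveOn (rhsDamp a h d y i) (fun t => y t i) t₀ R :=
  hz.congr (fun _ hs => (rhsDamp_congr hD hyz i (ht₀.trans hs.1) hs.2).symm)
    fun s hs => congrFun (hyz s hs.2).symm i

/-- Glue the solutions of `exists_extension_isPrimitiveOn` on consecutive pieces `[T k, T (k + 1)]`
on which `lipRate` has integral at most `1 / 2`. -/
theorem exists_continuous_isPrimitiveOn_rhsDamp (hW : Weights a) (hd : Gains d)
    (hD : Delays h hbar) (htstar : 0 ≤ tstar) (φ : ℝ →ᵇ (V → ℝ)) :
    ∃ y : ℝ → V → ℝ, Continuous y ∧ (∀ s ≤ tstar, y s = φ s) ∧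
      ∀ i b, IsPrimitiveOn (rhsDamp a h d y i) (fun t => y t i) tstar b := by
  obtain ⟨T, hT₀, hT, hTtop, hsmall⟩ := exists_monotone_forall_integral_le_half
    (intervalIntegrable_lipRate hW hd) (lipRate_nonneg hW hd) tstar
  have hT_ge : ∀ k, tstar ≤ T k := fun k => hT₀ ▸ hT k.zero_le
  choose next hnext_eq hnext using fun k (g : ℝ →ᵇ (V → ℝ)) =>
    exists_extension_isPrimitiveOn hW hd hD (hT k.le_succ) (htstar.trans (hT_ge k)) (hsmall k) g
  let G : ℕ → ℝ →ᵇ (V → ℝ) := fun k => Nat.rec φ next k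
  have hGprim : ∀ k i, IsPrimitiveOn (rhsDamp a h d (G k) i) (fun t => G k t i) tstar (T k) := by
    intro k
    induction k with
    | zero =>
      intro i t ht
      obtain rfl : t = tstar := le_antisymm (hT₀ ▸ ht.2) ht.1
      simp
    | succ k ih =>
      exact fun i => ((ih i).congr_rhsDamp hD htstar (hnext_eq k (G k))).trans (hnext k (G k) i)
        (hT_ge k)
  obtain ⟨y, hy⟩ := exists_eq_of_eq_on_Iic_succ hT hTtop (G := fun k s => G k s)
    fun k => hnext_eq k (G k)
  refine ⟨y, continuous_iff_continuousAt.2 fun t => ?_, fun s hs => hy 0 s (hT₀ ▸ hs),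
    fun i b => ?_⟩
  · obtain ⟨k, hk⟩ := (hTtop.eventually_gt_atTop t).exists
    exact (G k).continuous.continuousAt.congr
      (eventually_of_mem (Iio_mem_nhds hk) fun s hs => (hy k s hs.le).symm)
  · obtain ⟨k, hk⟩ := (hTtop.eventually_ge_atTop b).exists
    exact ((hGprim k i).congr_rhsDamp hD htstar (hy k)).mono hk

end Existence

section Comparison

variable {a h : V → V → ℝ → ℝ} {d : V → ℝ → ℝ} {hbar tstar : ℝ}

def IsSuperSolDamp (a h : V → V → ℝ → ℝ) (d : V → ℝ → ℝ) (tstar : ℝ) (w : ℝ → V → ℝ) :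
    Prop :=
  ∀ i σ t, tstar ≤ σ → σ ≤ t → IntervalIntegrable (rhsDamp a h d w i) volume σ t ∧
    ∫ s in σ..t, rhsDamp a h d w i s ≤ w t i - w σ i

theorem IsSuperSolDamp.add {w w' : ℝ → V → ℝ} (hw : IsSuperSolDamp a h d tstar w)
    (hw' : IsSuperSolDamp a h d tstar w') : IsSuperSolDamp a h d tstar (w + w') := by
  intro i σ t hσ hσt
  obtain ⟨hI, hle⟩ := hw i σ t hσ hσt
  obtain ⟨hI', hle'⟩ := hw' i σ t hσ hσt
  rw [show rhsDamp a h d (w + w') i = fun s => rhsDamp a h d w i s + rhsDamp a h d w' i s from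
    funext (rhsDamp_add w w' i), intervalIntegral.integral_add hI hI']
  refine ⟨hI.add hI', ?_⟩
  simp only [Pi.add_apply]
  linarith

theorem isSuperSolDamp_of_isPrimitiveOn {y : ℝ → V → ℝ}
    (hy : ∀ i b, IsPrimitiveOn (rhsDamp a h d y i) (fun t => y t i) tstar b) :
    IsSuperSolDamp a h d tstar y :=
  fun i _ t hσ hσt => ⟨(hy i t).intervalIntegrable hσ hσt le_rfl,
    ((hy i t).integral_eq_sub hσ hσt le_rfl).le⟩

theorem nonneg_on_Icc_of_isSuperSolDamp (hW : Weights a) (hd : Gains d) (hD : Delays h hbar)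
    (hbar0 : 0 ≤ hbar) (htstar : 0 ≤ tstar) {w : ℝ → V → ℝ} (hw : IsSuperSolDamp a h d tstar w)
    {σ₀ τ₀ : ℝ} (hσ₀ : tstar ≤ σ₀) (hσ₀τ₀ : σ₀ ≤ τ₀)
    (hsmall : ∀ i, ∫ s in σ₀..τ₀, lipRate a d i s ≤ 1 / 2)
    (hwc : ∀ i, ContinuousOn (fun t => w t i) (Icc σ₀ τ₀))
    (hw0 : ∀ s ∈ Icc (tstar - hbar) σ₀, ∀ i, 0 ≤ w s i) :
    ∀ s ∈ Icc σ₀ τ₀, ∀ i, 0 ≤ w s i := by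
  -- Let `m < 0` be the minimum of all `w j` on `[σ₀, τ₀]`, attained by `w i` at `τ`, and `σ` the
  -- last zero of `w i` before `τ`. On `(σ, τ]` the supersolution inequality gives
  -- `m ≥ m * ∫ lipRate ≥ m / 2`.
  by_contra! hneg
  obtain ⟨s₀, hs₀, i₀, hws₀⟩ := hneg
  choose τv hτv hmin using fun j =>
    isCompact_Icc.exists_isMinOn (nonempty_Icc.2 hσ₀τ₀) (hwc j)
  obtain ⟨i, -, hi⟩ := Finset.univ.exists_min_image (fun j => w (τv j) j) ⟨i₀, Finset.mem_univ _⟩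
  set τ := τv i
  set m := w τ i
  have hm_le : ∀ s ∈ Icc σ₀ τ₀, ∀ j, m ≤ w s j :=
    fun s hs j => (hi j (Finset.mem_univ j)).trans (hmin j hs)
  have hm : m < 0 := (hm_le s₀ hs₀ i₀).trans_lt hws₀
  have hm_le' : ∀ s ∈ Icc (tstar - hbar) τ₀, ∀ j, m ≤ w s j := fun s hs j => by
    rcases le_total s σ₀ with hsσ | hσs
    · exact hm.le.trans (hw0 s ⟨hs.1, hsσ⟩ j)
    · exact hm_le s ⟨hσs, hs.2⟩ j
  obtain ⟨σ, hσ, hwσ, hwneg⟩ := exists_nonneg_forall_Ioc_neg (hτv i).1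
    ((hwc i).mono (Icc_subset_Icc_right (hτv i).2)) (hw0 σ₀ ⟨by linarith, le_rfl⟩ i)
  have hσ0 : 0 ≤ σ := htstar.trans (hσ₀.trans hσ.1)
  obtain ⟨hI, hsuper⟩ := hw i σ τ (hσ₀.trans hσ.1) hσ.2
  have hL := intervalIntegrable_lipRate hW hd i σ τ
  have hlow : m * ∫ s in σ..τ, lipRate a d i s ≤ ∫ s in σ..τ, rhsDamp a h d w i s := by
    rw [← intervalIntegral.integral_const_mul]
    refine intervalIntegral.integral_mono_on_of_le_Ioo hσ.2 (hL.const_mul m) hI fun s hs => ?_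
    have hs0 : 0 ≤ s := hσ0.trans hs.1.le
    refine mul_lipRate_le_rhsDamp hW hd hs0 hm.le (hwneg s ⟨hs.1, hs.2.le⟩).le fun j => ?_
    have hdel := (hD i j).2 s hs0
    exact hm_le' _ ⟨by linarith [hdel.2, hσ₀.trans hσ.1, hs.1],
      by linarith [hdel.1, hs.2, (hτv i).2]⟩ j
  have hL_le : ∫ s in σ..τ, lipRate a d i s ≤ 1 / 2 :=
    (intervalIntegral.integral_mono_interval hσ.1 hσ.2 (hτv i).2
      (Eventually.of_forall (lipRate_nonneg hW hd i))
      (intervalIntegrable_lipRate hW hd i _ _)).trans (hsmall i)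
  have hL_nonneg : 0 ≤ ∫ s in σ..τ, lipRate a d i s :=
    intervalIntegral.integral_nonneg hσ.2 fun s _ => lipRate_nonneg hW hd i s
  nlinarith

theorem nonneg_of_isSuperSolDamp (hW : Weights a) (hd : Gains d) (hD : Delays h hbar)
    (hbar0 : 0 ≤ hbar) (htstar : 0 ≤ tstar) {w : ℝ → V → ℝ} (hw : IsSuperSolDamp a h d tstar w)
    (hwc : ∀ i b, ContinuousOn (fun t => w t i) (Icc tstar b))
    (hw0 : ∀ s ∈ Icc (tstar - hbar) tstar, ∀ i, 0 ≤ w s i) :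
    ∀ t ≥ tstar, ∀ i, 0 ≤ w t i := by
  obtain ⟨T, hT₀, hT, hTtop, hsmall⟩ := exists_monotone_forall_integral_le_half
    (intervalIntegrable_lipRate hW hd) (lipRate_nonneg hW hd) tstar
  have hT_ge : ∀ k, tstar ≤ T k := fun k => hT₀ ▸ hT k.zero_le
  have hpieces : ∀ k, ∀ s ∈ Icc (tstar - hbar) (T k), ∀ i, 0 ≤ w s i := by
    intro k
    induction k with
    | zero => exact hT₀ ▸ hw0
    | succ k ih =>
      intro s hs i
      rcases le_total s (T k) with hsk | hks
      · exact ih s ⟨hs.1, hsk⟩ i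
      · exact nonneg_on_Icc_of_isSuperSolDamp hW hd hD hbar0 htstar hw (hT_ge k) (hT k.le_succ)
          (hsmall k) (fun j => (hwc j _).mono (Icc_subset_Icc_left (hT_ge k))) ih s ⟨hks, hs.2⟩ i
  intro t ht i
  obtain ⟨k, hk⟩ := (hTtop.eventually_ge_atTop t).exists
  exact hpieces k t ⟨by linarith, hk⟩ i

end Comparison

section Containment

variable {a h : V → V → ℝ → ℝ} {b : V → W → ℝ → ℝ} {hbar tstar : ℝ} {m : ℕ}
  {xL : W → EuclideanSpace ℝ (Fin m)} {x : ℝ → V → EuclideanSpace ℝ (Fin m)}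

theorem BGains.gains {V W : Type*} [Fintype W] {b : V → W → ℝ → ℝ} (hB : BGains b) :
    Gains fun i t => ∑ k, b i k t :=
  fun i => ⟨Finset.measurable_sum _ fun k _ => (hB i k).1,
    fun t ht => Finset.sum_nonneg fun k _ => (hB i k).2.1 t ht,
    fun T => integrable_finsetSum _ fun k _ => (hB i k).2.2 T⟩

theorem map_rhsCont (f : EuclideanSpace ℝ (Fin m) →L[ℝ] ℝ) (M : ℝ) (i : V) (s : ℝ) :
    f (rhsCont m a h b xL x i s) =
      -rhsDamp a h (fun i t => ∑ k, b i k t) (fun t j => M - f (x t j)) i s -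
        ∑ k, b i k s * (M - f (xL k)) := by
  have hfollow : ∑ j ∈ Finset.univ.erase i, a i j s * (M - f (x (s - h i j s) j) - (M - f (x s i)))
      = -∑ j ∈ Finset.univ.erase i, a i j s * (f (x (s - h i j s) j) - f (x s i)) := by
    rw [← Finset.sum_neg_distrib]
    exact Finset.sum_congr rfl fun j _ => by ring
  have hlead : ∑ k, b i k s * (f (xL k) - f (x s i))
      = (∑ k, b i k s) * (M - f (x s i)) - ∑ k, b i k s * (M - f (xL k)) := by
    rw [Finset.sum_mul, ← Finset.sum_sub_distrib]
    exact Finset.sum_congr rfl fun k _ => by ring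
  simp only [rhsCont, rhsDamp, map_add, map_sum, map_smul, map_sub, smul_eq_mul, hfollow, hlead]
  ring

theorem IsSolCont.isPrimitiveOn_map (hx : IsSolCont m a h b xL hbar tstar x)
    (f : EuclideanSpace ℝ (Fin m) →L[ℝ] ℝ) (i : V) (t : ℝ) :
    IsPrimitiveOn (fun s => f (rhsCont m a h b xL x i s)) (fun t => f (x t i)) tstar t :=
  IsPrimitiveOn.map (x := fun t => x t i) (fun t' ht' => hx.2.2 i t' ht'.1) f

theorem IsSolCont.isSuperSolDamp_sub_map (hB : BGains b) (htstar : 0 ≤ tstar)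
    (hx : IsSolCont m a h b xL hbar tstar x) (f : EuclideanSpace ℝ (Fin m) →L[ℝ] ℝ) {M : ℝ}
    (hM : ∀ k, f (xL k) ≤ M) :
    IsSuperSolDamp a h (fun i t => ∑ k, b i k t) tstar (fun t j => M - f (x t j)) := by
  intro i σ t hσ hσt
  have hprim := hx.isPrimitiveOn_map f i t
  have hI := hprim.intervalIntegrable hσ hσt le_rfl
  have hβ : IntervalIntegrable (fun s => ∑ k, b i k s * (M - f (xL k))) volume σ t := by
    have hβ0 : IntegrableOn (fun s => ∑ k, b i k s * (M - f (xL k))) (Icc 0 t) :=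
      integrable_finsetSum _ fun k _ => ((hB i k).2.2 t).mul_const (M - f (xL k))
    refine (hβ0.mono_set ?_).intervalIntegrable
    rw [uIcc_of_le hσt]
    exact Icc_subset_Icc_left (htstar.trans hσ)
  have hβ_nonneg : 0 ≤ ∫ s in σ..t, ∑ k, b i k s * (M - f (xL k)) :=
    intervalIntegral.integral_nonneg hσt fun s hs => Finset.sum_nonneg fun k _ =>
      mul_nonneg ((hB i k).2.1 s (htstar.trans (hσ.trans hs.1))) (sub_nonneg.2 (hM k))
  have heq : rhsDamp a h (fun i t => ∑ k, b i k t) (fun t j => M - f (x t j)) i =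
      fun s => -f (rhsCont m a h b xL x i s) - ∑ k, b i k s * (M - f (xL k)) :=
    funext fun s => by rw [map_rhsCont f M]; ring
  have hI' : IntervalIntegrable (fun s => -f (rhsCont m a h b xL x i s)) volume σ t := hI.neg
  rw [heq]
  refine ⟨hI'.sub hβ, ?_⟩
  rw [intervalIntegral.integral_sub hI' hβ, intervalIntegral.integral_neg,
    hprim.integral_eq_sub hσ hσt le_rfl]
  linarith

theorem IsSolCont.eventually_map_lt (hW : Weights a) (hB : BGains b) (hD : Delays h hbar)
    (hbar0 : 0 ≤ hbar) (htstar : 0 ≤ tstar)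
    (hstab : ∀ z, IsSolDamp a h (fun i t => ∑ k, b i k t) hbar tstar z →
      ∀ i, Tendsto (fun t => z t i) atTop (𝓝 0))
    (hx : IsSolCont m a h b xL hbar tstar x) (f : EuclideanSpace ℝ (Fin m) →L[ℝ] ℝ) {M c : ℝ}
    (hM : ∀ k, f (xL k) ≤ M) (hMc : M < c) (i : V) :
    ∀ᶠ t in atTop, f (x t i) < c := by
  obtain ⟨Bx, hBx⟩ := hx.2.1
  set K := ‖f‖ * Bx + |M|
  obtain ⟨z, hzc, hz0, hzprim⟩ := exists_continuous_isPrimitiveOn_rhsDamp hW hB.gains hD htstar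
    (BoundedContinuousFunction.const ℝ fun _ : V => K)
  have hz : IsSolDamp a h (fun i t => ∑ k, b i k t) hbar tstar z :=
    ⟨fun j => ((continuous_apply j).comp hzc).aestronglyMeasurable,
      ⟨|K|, fun s hs j => by simp [hz0 s hs.2]⟩, fun j t ht => hzprim j t t ⟨ht, le_rfl⟩⟩
  -- `z + (M - f ∘ x)` is a supersolution, nonnegative on the initial window where `z = K`.
  have hw := (isSuperSolDamp_of_isPrimitiveOn hzprim).add (hx.isSuperSolDamp_sub_map hB htstar f hM)
  have hwc : ∀ j t, ContinuousOn (fun s => (z + fun s j => M - f (x s j)) s j) (Icc tstar t) :=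
    fun j t => ((continuous_apply j).comp hzc).continuousOn.add
      (continuousOn_const.sub (hx.isPrimitiveOn_map f j t).continuousOn)
  have hw0 : ∀ s ∈ Icc (tstar - hbar) tstar, ∀ j, 0 ≤ (z + fun s j => M - f (x s j)) s j := by
    intro s hs j
    have hfx : f (x s j) ≤ ‖f‖ * Bx :=
      (le_abs_self _).trans ((f.le_opNorm _).trans (mul_le_mul_of_nonneg_left (hBx s hs j)
        (norm_nonneg f)))
    simp only [Pi.add_apply, hz0 s hs.2, BoundedContinuousFunction.const_apply, K]
    linarith [neg_abs_le M]
  have hle := nonneg_of_isSuperSolDamp hW hB.gains hD hbar0 htstar hw hwc hw0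
  filter_upwards [(hstab z hz i).eventually (gt_mem_nhds (sub_pos.2 hMc)),
    eventually_ge_atTop tstar] with t hzt ht
  have := hle t ht i
  simp only [Pi.add_apply] at this
  linarith

theorem IsSolDamp.isSolCont_smul {y : ℝ → V → ℝ}
    (hy : IsSolDamp a h (fun i t => ∑ k, b i k t) hbar tstar y) (v : EuclideanSpace ℝ (Fin m)) :
    IsSolCont m a h b (fun _ => 0) hbar tstar (fun t j => y t j • v) := by
  have hrhs : ∀ i, rhsCont m a h b (fun _ => 0) (fun t j => y t j • v) i = fun s =>
      ContinuousLinearMap.toSpanSingleton ℝ v (rhsDamp a h (fun i t => ∑ k, b i k t) y i s) :=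
    fun i => funext fun s => by
      simp only [rhsCont, rhsDamp, ContinuousLinearMap.toSpanSingleton_apply, add_smul, neg_smul,
        Finset.sum_smul, sub_smul, mul_smul, zero_sub, smul_neg, Finset.sum_neg_distrib]
      abel
  refine ⟨fun j => ((hy.1 j).smul_const v), ?_, fun i t ht => ?_⟩
  · obtain ⟨B, hB⟩ := hy.2.1
    exact ⟨B * ‖v‖, fun s hs j => by
      rw [norm_smul, Real.norm_eq_abs]
      exact mul_le_mul_of_nonneg_right (hB s hs j) (norm_nonneg v)⟩
  · have := (IsPrimitiveOn.map (x := fun t => y t i) (fun t' ht' => hy.2.2 i t' ht'.1)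
      (ContinuousLinearMap.toSpanSingleton ℝ v)) t ⟨ht, le_rfl⟩
    rw [hrhs]
    simpa only [ContinuousLinearMap.toSpanSingleton_apply] using this

end Containment

theorem stmt14 [Nonempty W]
    (a : V → V → ℝ → ℝ) (hW : Weights a)
    (b : V → W → ℝ → ℝ) (hB : BGains b)
    (hbar : ℝ) (hbar0 : 0 ≤ hbar) (h : V → V → ℝ → ℝ) (hD : Delays h hbar) :
    (∀ m : ℕ, 1 ≤ m → ∀ xL : W → EuclideanSpace ℝ (Fin m),
      ∀ tstar ≥ (0:ℝ), ∀ x : ℝ → V → EuclideanSpace ℝ (Fin m),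
        IsSolCont m a h b xL hbar tstar x →
        ∀ i : V, Tendsto (fun t => Metric.infDist (x t i) (convexHull ℝ (Set.range xL)))
          atTop (𝓝 0)) ↔
    (∀ tstar ≥ (0:ℝ), ∀ y : ℝ → V → ℝ,
      IsSolDamp a h (fun i t => ∑ k : W, b i k t) hbar tstar y →
      ∀ i : V, Tendsto (fun t => y t i) atTop (𝓝 0)) := by
  constructor
  · -- Put a scalar damped solution on a line, with all leaders at the origin.
    intro hcont tstar htstar y hy i
    set v : EuclideanSpace ℝ (Fin 1) := EuclideanSpace.single 0 1
    have hv : ‖v‖ = 1 := by simp [v]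
    have hdist := hcont 1 le_rfl (fun _ => 0) tstar htstar _ (hy.isSolCont_smul v) i
    simp only [range_const, convexHull_singleton, Metric.infDist_singleton, dist_zero_right,
      norm_smul, hv, mul_one] at hdist
    exact tendsto_zero_iff_norm_tendsto_zero.2 hdist
  · intro hstab m _ xL tstar htstar x hx i
    refine tendsto_infDist_of_eventually_lt (isBounded_convexHull.2 (finite_range xL).isBounded)
      (convex_convexHull ℝ _) fun f c hc => ?_
    obtain ⟨k₀, hk₀⟩ := Finite.exists_max fun k => f (xL k)
    exact hx.eventually_map_lt hW hB hD hbar0 htstar (hstab tstar htstar) f hk₀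
      (hc _ (subset_convexHull ℝ _ (mem_range_self k₀))) i
end

section
/- Let x be a solution of the discrete-time delayed averaging algorithm with starting time t*, and define λ(t) = min over integers s with t−h̄ ≤ s ≤ t of min_{i∈V} x_i(s) and Λ(t) = max over the same range of max_{i∈V} x_i(s). Then λ is non-decreasing and Λ is non-increasing on {t*, t*+1, …}; in particular, λ(t*) ≤ x_i(t) ≤ Λ(t*) for all i ∈ V and all integer t ≥ t*. -/
open MeasureTheory Filter Topology Set

variable {V : Type*} [Fintype V] [DecidableEq V]

/-- A sequence of stochastic matrices. -/
def StochMat (A : ℕ → V → V → ℝ) : Prop :=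
  (∀ t : ℕ, ∀ i j : V, 0 ≤ A t i j) ∧ ∀ t : ℕ, ∀ i : V, (∑ j, A t i j) = 1

/-!
Each new value `x_i(t+1)` is a convex combination of values from the window `[t - h̄, t]`,
so it lies in `[λ(t), Λ(t)]`. The window `[t + 1 - h̄, t + 1]` therefore contains only values
of the old window and values in `[λ(t), Λ(t)]`, whence `λ(t) ≤ λ(t+1)` and `Λ(t+1) ≤ Λ(t)`.
-/

section Window

variable {ι : Type*} (hbar : ℕ) (x : ℤ → ι → ℝ)

def windowValues (t : ℤ) : Set ℝ :=
  {v | ∃ s : ℤ, t - (hbar : ℤ) ≤ s ∧ s ≤ t ∧ ∃ i : ι, x s i = v}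

theorem lamD_eq_sInf_windowValues (t : ℤ) : lamD hbar x t = sInf (windowValues hbar x t) := rfl

theorem LamD_eq_sSup_windowValues (t : ℤ) : LamD hbar x t = sSup (windowValues hbar x t) := rfl

theorem windowValues_finite [Finite ι] (t : ℤ) : (windowValues hbar x t).Finite := by
  refine (((finite_Icc (t - hbar) t).prod finite_univ).image fun p : ℤ × ι => x p.1 p.2).subset ?_
  rintro v ⟨s, hs₁, hs₂, i, rfl⟩
  exact ⟨(s, i), ⟨⟨hs₁, hs₂⟩, trivial⟩, rfl⟩

theorem windowValues_eq_empty [IsEmpty ι] (t : ℤ) : windowValues hbar x t = ∅ := by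
  simp [windowValues]

theorem windowValues_nonempty [Nonempty ι] (t : ℤ) : (windowValues hbar x t).Nonempty :=
  ⟨_, t, by omega, le_rfl, Classical.arbitrary ι, rfl⟩

theorem windowValues_add_one_subset (t : ℤ) :
    windowValues hbar x (t + 1) ⊆ windowValues hbar x t ∪ range (x (t + 1)) := by
  rintro v ⟨s, hs₁, hs₂, i, rfl⟩
  rcases hs₂.lt_or_eq with hs | rfl
  · exact Or.inl ⟨s, by omega, by omega, i, rfl⟩
  · exact Or.inr ⟨i, rfl⟩

variable {hbar x}

theorem mem_Icc_lamD_LamD [Finite ι] {s t : ℤ} (hs₁ : t - (hbar : ℤ) ≤ s) (hs₂ : s ≤ t) (i : ι) :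
    x s i ∈ Icc (lamD hbar x t) (LamD hbar x t) :=
  have hmem : x s i ∈ windowValues hbar x t := ⟨s, hs₁, hs₂, i, rfl⟩
  ⟨csInf_le (windowValues_finite hbar x t).bddBelow hmem,
    le_csSup (windowValues_finite hbar x t).bddAbove hmem⟩

theorem lamD_le_lamD_add_one [Finite ι] {t : ℤ}
    (hnext : ∀ i, lamD hbar x t ≤ x (t + 1) i) : lamD hbar x t ≤ lamD hbar x (t + 1) := by
  rcases isEmpty_or_nonempty ι with hι | hι
  · simp only [lamD_eq_sInf_windowValues, windowValues_eq_empty, le_rfl]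
  refine le_csInf (windowValues_nonempty hbar x _) fun v hv => ?_
  rcases windowValues_add_one_subset hbar x t hv with hv | ⟨i, rfl⟩
  · exact csInf_le (windowValues_finite hbar x t).bddBelow hv
  · exact hnext i

theorem LamD_add_one_le_LamD [Finite ι] {t : ℤ}
    (hnext : ∀ i, x (t + 1) i ≤ LamD hbar x t) : LamD hbar x (t + 1) ≤ LamD hbar x t := by
  rcases isEmpty_or_nonempty ι with hι | hι
  · simp only [LamD_eq_sSup_windowValues, windowValues_eq_empty, le_rfl]
  refine csSup_le (windowValues_nonempty hbar x _) fun v hv => ?_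
  rcases windowValues_add_one_subset hbar x t hv with hv | ⟨i, rfl⟩
  · exact le_csSup (windowValues_finite hbar x t).bddAbove hv
  · exact hnext i

end Window

namespace IsSolD

variable {A : ℕ → V → V → ℝ} {hbar : ℕ} {h : V → V → ℕ → ℕ} {tstar : ℕ} {x : ℤ → V → ℝ}

-- The diagonal weight `a_ii(t)` multiplies the current value `x_i(t)`, whatever `h_ii(t)` is.
theorem eq_sum_delayed (hsol : IsSolD A h tstar x) (hst : StochMat A) {n : ℕ} (hn : tstar ≤ n)
    (i : V) :
    x (n + 1) i = ∑ j, A n i j * if j = i then x n i else x (n - h i j n) j := by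
  have hoff : ∑ j ∈ Finset.univ.erase i, A n i j = 1 - A n i i := by
    rw [← hst.2 n i, ← Finset.add_sum_erase _ _ (Finset.mem_univ i), add_sub_cancel_left]
  have hdelayed :
      ∑ j ∈ Finset.univ.erase i, A n i j * (if j = i then x n i else x (n - h i j n) j) =
        ∑ j ∈ Finset.univ.erase i, A n i j * x (n - h i j n) j :=
    Finset.sum_congr rfl fun j hj => by rw [if_neg (Finset.ne_of_mem_erase hj)]
  rw [hsol i n hn, ← Finset.add_sum_erase _ _ (Finset.mem_univ i), if_pos rfl, hdelayed]
  simp only [mul_sub, Finset.sum_sub_distrib, ← Finset.sum_mul, hoff]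
  ring

theorem mem_Icc_add_one (hsol : IsSolD A h tstar x) (hst : StochMat A)
    (hD : ∀ i j t, h i j t ≤ hbar) {n : ℕ} (hn : tstar ≤ n) (i : V) :
    x (n + 1) i ∈ Icc (lamD hbar x n) (LamD hbar x n) := by
  rw [hsol.eq_sum_delayed hst hn]
  refine (convex_Icc _ _).sum_mem (fun j _ => hst.1 n i j) (hst.2 n i) fun j _ => ?_
  split_ifs
  · exact mem_Icc_lamD_LamD (by omega) le_rfl i
  · exact mem_Icc_lamD_LamD (by have := hD i j n; omega) (by omega) j

theorem monotoneOn_lamD (hsol : IsSolD A h tstar x) (hst : StochMat A)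
    (hD : ∀ i j t, h i j t ≤ hbar) : MonotoneOn (lamD hbar x) (Ici tstar) :=
  monotoneOn_of_le_add_one ordConnected_Ici fun t _ ht _ => by
    lift t to ℕ using (Nat.cast_nonneg tstar).trans ht
    exact lamD_le_lamD_add_one fun i =>
      (hsol.mem_Icc_add_one hst hD (Nat.cast_le.mp (mem_Ici.mp ht)) i).1

theorem antitoneOn_LamD (hsol : IsSolD A h tstar x) (hst : StochMat A)
    (hD : ∀ i j t, h i j t ≤ hbar) : AntitoneOn (LamD hbar x) (Ici tstar) :=
  antitoneOn_of_add_one_le ordConnected_Ici fun t _ ht _ => by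
    lift t to ℕ using (Nat.cast_nonneg tstar).trans ht
    exact LamD_add_one_le_LamD fun i =>
      (hsol.mem_Icc_add_one hst hD (Nat.cast_le.mp (mem_Ici.mp ht)) i).2

end IsSolD

theorem stmt18
    (A : ℕ → V → V → ℝ) (hst : StochMat A)
    (hbar : ℕ) (h : V → V → ℕ → ℕ) (hD : ∀ i j t, h i j t ≤ hbar)
    (tstar : ℕ) (x : ℤ → V → ℝ) (hsol : IsSolD A h tstar x) :
    (∀ s t : ℤ, (tstar : ℤ) ≤ s → s ≤ t →
      lamD hbar x s ≤ lamD hbar x t ∧ LamD hbar x t ≤ LamD hbar x s) ∧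
    ∀ i : V, ∀ t : ℤ, (tstar : ℤ) ≤ t →
      lamD hbar x (tstar : ℤ) ≤ x t i ∧ x t i ≤ LamD hbar x (tstar : ℤ) := by
  have mono := hsol.monotoneOn_lamD hst hD
  have anti := hsol.antitoneOn_LamD hst hD
  refine ⟨fun s t hs hle => ⟨mono hs (hs.trans hle) hle, anti hs (hs.trans hle) hle⟩,
    fun i t ht => ?_⟩
  have hwin := mem_Icc_lamD_LamD (x := x) (sub_le_self t (Nat.cast_nonneg hbar)) le_rfl i
  exact ⟨(mono self_mem_Ici ht ht).trans hwin.1, hwin.2.trans (anti self_mem_Ici ht ht)⟩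
end

section
/- Let (a_k)_{k∈ℕ} be a sequence with 0 < a_k < 1/2 for all k and Σ_{k=0}^∞ a_k < ∞, and let x_0, x_1 : ℕ → ℝ satisfy the two-agent averaging recursion x_i(k+1) = (1 − a_k)·x_{1−i}(k) + a_k·x_i(k) for i ∈ {0,1} and all k ∈ ℕ. Then |x_1(k) − x_0(k)| = |x_1(0) − x_0(0)|·Π_{j=0}^{k−1} (1 − 2a_j) for all k, and if x_1(0) ≠ x_0(0) there exists c > 0 such that |x_1(k) − x_0(k)| ≥ c for all k; in particular, x_1(k) − x_0(k) does not converge to 0 and the recursion fails to reach consensus. -/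
open MeasureTheory Filter Topology Set

/-- The partial products are `exp` of partial sums of the nonpositive summable series
`log (1 - b j)`, so they never drop below `exp` of its total sum. -/
theorem Real.exists_pos_le_prod_one_sub {ι : Type*} {b : ι → ℝ}
    (hb : ∀ j, 0 ≤ b j ∧ b j < 1) (hs : Summable b) :
    ∃ c > 0, ∀ s : Finset ι, c ≤ ∏ j ∈ s, (1 - b j) := by
  have hlog : Summable fun j ↦ -Real.log (1 - b j) := by
    simpa [sub_eq_add_neg] using (Real.summable_log_one_add_of_summable hs.neg).neg
  have hlog_nonneg : ∀ j, 0 ≤ -Real.log (1 - b j) := fun j ↦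
    neg_nonneg.mpr (Real.log_nonpos (by linarith [hb j]) (by linarith [hb j]))
  refine ⟨Real.exp (-∑' j, -Real.log (1 - b j)), Real.exp_pos _, fun s ↦ ?_⟩
  have hprod : ∏ j ∈ s, (1 - b j) = Real.exp (-∑ j ∈ s, -Real.log (1 - b j)) := by
    simp only [Finset.sum_neg_distrib, neg_neg, Real.exp_sum]
    exact Finset.prod_congr rfl fun j _ ↦ (Real.exp_log (by linarith [hb j])).symm
  rw [hprod, Real.exp_le_exp, neg_le_neg_iff]
  exact hlog.sum_le_tsum s fun j _ ↦ hlog_nonneg j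

theorem abs_eq_abs_mul_prod_of_abs_succ {d r : ℕ → ℝ}
    (h : ∀ k, |d (k + 1)| = r k * |d k|) (k : ℕ) :
    |d k| = |d 0| * ∏ j ∈ Finset.range k, r j := by
  induction k with
  | zero => simp
  | succ k ih => rw [h, ih, Finset.prod_range_succ]; ring

theorem stmt19
    (a : ℕ → ℝ) (ha : ∀ k : ℕ, 0 < a k ∧ a k < 1/2) (hsum : Summable a)
    (x y : ℕ → ℝ)
    (hx : ∀ k : ℕ, x (k+1) = (1 - a k) * y k + a k * x k)
    (hy : ∀ k : ℕ, y (k+1) = (1 - a k) * x k + a k * y k) :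
    (∀ k : ℕ, |y k - x k| = |y 0 - x 0| * ∏ j ∈ Finset.range k, (1 - 2 * a j)) ∧
    (x 0 ≠ y 0 →
      (∃ c > (0:ℝ), ∀ k : ℕ, c ≤ |y k - x k|) ∧
      ¬ Tendsto (fun k : ℕ => y k - x k) atTop (𝓝 0)) := by
  have hstep : ∀ k, |y (k + 1) - x (k + 1)| = (1 - 2 * a k) * |y k - x k| := fun k ↦ by
    rw [show y (k + 1) - x (k + 1) = -((1 - 2 * a k) * (y k - x k)) by rw [hx, hy]; ring,
      abs_neg, abs_mul, abs_of_pos (by linarith [ha k])]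
  have habs := abs_eq_abs_mul_prod_of_abs_succ (d := fun k ↦ y k - x k) hstep
  refine ⟨habs, fun hne ↦ ?_⟩
  obtain ⟨c, hc, hprod⟩ := Real.exists_pos_le_prod_one_sub (b := fun j ↦ 2 * a j)
    (fun j ↦ ⟨by linarith [ha j], by linarith [ha j]⟩) (hsum.mul_left 2)
  have hd0 : 0 < |y 0 - x 0| := abs_pos.mpr (sub_ne_zero.mpr hne.symm)
  have hbound : ∀ k, |y 0 - x 0| * c ≤ |y k - x k| := fun k ↦ by
    rw [habs k]
    exact mul_le_mul_of_nonneg_left (hprod _) hd0.le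
  refine ⟨⟨_, mul_pos hd0 hc, hbound⟩, fun hlim ↦ ?_⟩
  have := ge_of_tendsto' (by simpa using hlim.abs) hbound
  linarith [mul_pos hd0 hc]
end
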